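/- arXiv:1011.4888 — 6 statements merged into one kernel-verified Lean document; each statement's English description precedes it below -/
import Mathlib

section
/- If M is a matroid with m elements and rank at least 2, τ is the size of a smallest set intersecting every basis of M in at least two elements, and c is a coloring of the ground set of M using exactly m - τ + 2 colors, then M has a basis all of whose elements receive pairwise distinct colors. -/
/-!
A heterochromatic basis is a transversal of the `k` colour classes that is a basis. By Rado's
theorem (proved by Welsh's argument: shrink the classes one element at a time, using
submodularity of the rank) one exists if `r(A(J)) ≥ r(M) - (k - |J|)` for every set `J` of
colours, where `A(J)` is the union of their classes. If this failed for some `J`, every basis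
would have at least `k - |J| + 1` elements outside `S = A(J)`, so deleting `k - |J| - 1` elements
of `E \ S` would leave a double transversal of size at most `m - |J| - (k - |J| - 1) = τ - 1`.
-/

open Function

namespace Set

variable {α ι : Type*} [DecidableEq ι] {A : ι → Set α} {j : ι} {s t : Set α}
  {J J₁ J₂ : Finset ι}

lemma biUnion_update_of_notMem (hj : j ∉ J) :
    ⋃ i ∈ J, update A j s i = ⋃ i ∈ J, A i :=
  iUnion₂_congr fun _ hi => update_of_ne (ne_of_mem_of_not_mem hi hj) _ _

lemma biUnion_union_subset_union_update (hj₁ : j ∈ J₁) (hj₂ : j ∈ J₂)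
    (hst : A j ⊆ s ∪ t) :
    ⋃ i ∈ J₁ ∪ J₂, A i ⊆ (⋃ i ∈ J₁, update A j s i) ∪ ⋃ i ∈ J₂, update A j t i := by
  simp only [iUnion_subset_iff, Finset.mem_union]
  intro i hi x hx
  by_cases hij : i = j
  · subst hij
    rcases hst hx with hs | ht
    · exact Or.inl (mem_biUnion hj₁ (by rwa [update_self]))
    · exact Or.inr (mem_biUnion hj₂ (by rwa [update_self]))
  · rcases hi with hi | hi
    · exact Or.inl (mem_biUnion hi (by rwa [update_of_ne hij]))
    · exact Or.inr (mem_biUnion hi (by rwa [update_of_ne hij]))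

lemma biUnion_erase_inter_subset_inter_update :
    ⋃ i ∈ (J₁ ∩ J₂).erase j, A i ⊆ (⋃ i ∈ J₁, update A j s i) ∩ ⋃ i ∈ J₂, update A j t i := by
  simp only [iUnion_subset_iff, Finset.mem_erase, Finset.mem_inter]
  rintro i ⟨hij, hi₁, hi₂⟩ x hx
  exact ⟨mem_biUnion hi₁ (by rwa [update_of_ne hij]),
    mem_biUnion hi₂ (by rwa [update_of_ne hij])⟩

lemma exists_subset_ncard_add_eq_of_le_ncard_inter {𝓑 : Set (Set α)} {X : Set α} {k n : ℕ}
    (hX : X.Finite) (h𝓑 : 𝓑.Nonempty) (h : ∀ B ∈ 𝓑, k + n ≤ (B ∩ X).ncard) :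
    ∃ T ⊆ X, T.ncard + n = X.ncard ∧ ∀ B ∈ 𝓑, k ≤ (B ∩ T).ncard := by
  obtain ⟨B₀, hB₀⟩ := h𝓑
  have hn : n ≤ X.ncard := by
    grw [← ncard_le_ncard inter_subset_right hX, ← h B₀ hB₀]
    omega
  obtain ⟨U, hUX, rfl⟩ := exists_subset_card_eq hn
  refine ⟨X \ U, sdiff_subset, ncard_sdiff_add_ncard_of_subset hUX hX, fun B hB => ?_⟩
  have hcover : B ∩ X ⊆ (B ∩ (X \ U)) ∪ U := fun x hx => by
    by_cases hxU : x ∈ U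
    exacts [Or.inr hxU, Or.inl ⟨hx.1, hx.2, hxU⟩]
  have hcard := (h B hB).trans <|
    (ncard_le_ncard hcover ((hX.sdiff.inter_of_right B).union (hX.subset hUX))).trans
      (ncard_union_le _ _)
  omega

lemma sum_ncard_update_diff_singleton_lt [Fintype ι] (hAj : (A j).Finite) {x : α} (hx : x ∈ A j) :
    ∑ i, (update A j (A j \ {x}) i).ncard < ∑ i, (A i).ncard := by
  rw [← Finset.add_sum_erase _ _ (Finset.mem_univ j),
    ← Finset.add_sum_erase _ _ (Finset.mem_univ j), update_self,
    Finset.sum_congr rfl fun i hi => by rw [update_of_ne (Finset.ne_of_mem_erase hi)]]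
  gcongr
  exact ncard_sdiff_singleton_lt_of_mem hx hAj

end Set

open Set

namespace Matroid

variable {α ι : Type*} {M : Matroid α}

/-- The rank as a natural number (`0` on sets of infinite rank). -/
noncomputable def rk (M : Matroid α) (X : Set α) : ℕ := (M.eRk X).toNat

section rk

variable [M.RankFinite] {B I X Y : Set α}

lemma cast_rk_eq (X : Set α) : (M.rk X : ℕ∞) = M.eRk X :=
  ENat.natCast_toNat (M.isRkFinite_set X).eRk_lt_top.ne

lemma rk_mono (hXY : X ⊆ Y) : M.rk X ≤ M.rk Y := by
  have h := M.eRk_mono hXY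
  rw [← cast_rk_eq, ← cast_rk_eq] at h
  exact_mod_cast h

lemma rk_inter_add_rk_union_le (X Y : Set α) :
    M.rk (X ∩ Y) + M.rk (X ∪ Y) ≤ M.rk X + M.rk Y := by
  have h := M.eRk_inter_add_eRk_union_le X Y
  simp only [← cast_rk_eq] at h
  exact_mod_cast h

lemma Indep.ncard_le_rk (hI : M.Indep I) (hIX : I ⊆ X) : I.ncard ≤ M.rk X := by
  have h := hI.encard_le_eRk_of_subset hIX
  rw [← cast_rk_eq, ← hI.finite.cast_ncard_eq] at h
  exact_mod_cast h

lemma IsBase.ncard_eq_rk_ground (hB : M.IsBase B) : B.ncard = M.rk M.E := by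
  have h := hB.encard_eq_eRank
  rw [eRank_def, ← cast_rk_eq, ← hB.finite.cast_ncard_eq] at h
  exact_mod_cast h

lemma exists_isBase_subset_of_rk_ground_le (h : M.rk M.E ≤ M.rk X) :
    ∃ B, M.IsBase B ∧ B ⊆ X := by
  obtain ⟨I, hI⟩ := M.exists_isBasis' X
  refine ⟨I, hI.indep.isBase_of_eRk_ge hI.indep.finite ?_, hI.subset⟩
  rw [eRank_def, hI.eRk_eq_eRk, ← cast_rk_eq, ← cast_rk_eq]
  exact_mod_cast h

lemma IsBase.rk_ground_le_rk_add_ncard_diff (hB : M.IsBase B) (X : Set α) :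
    M.rk M.E ≤ M.rk X + (B \ X).ncard := by
  rw [← hB.ncard_eq_rk_ground, ← ncard_inter_add_ncard_sdiff_eq_ncard B X hB.finite]
  gcongr
  exact (hB.indep.subset inter_subset_left).ncard_le_rk inter_subset_right

end rk

def HasTransversalBase (M : Matroid α) (A : ι → Set α) : Prop :=
  ∃ B, M.IsBase B ∧ ∃ f : B → ι, Injective f ∧ ∀ b, (b : α) ∈ A (f b)

lemma HasTransversalBase.mono {A A' : ι → Set α} (h : M.HasTransversalBase A') (hA : A' ≤ A) :
    M.HasTransversalBase A := by
  obtain ⟨B, hB, f, hf, hfB⟩ := h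
  exact ⟨B, hB, f, hf, fun b => hA _ (hfB b)⟩

/-- Rado's condition for the family `A` to have a transversal that is a basis of `M`. -/
def RadoCondition [Fintype ι] (M : Matroid α) (A : ι → Set α) : Prop :=
  ∀ J : Finset ι, M.rk M.E + J.card ≤ M.rk (⋃ j ∈ J, A j) + Fintype.card ι

section Rado

variable [Fintype ι] {A : ι → Set α}

lemma RadoCondition.hasTransversalBase_of_subsingleton [M.RankFinite] (h : M.RadoCondition A)
    (hA : ∀ i, (A i).Subsingleton) : M.HasTransversalBase A := by
  have hspan : M.rk M.E ≤ M.rk (⋃ i, A i) := by simpa using h Finset.univ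
  obtain ⟨B, hB, hBA⟩ := exists_isBase_subset_of_rk_ground_le hspan
  choose f hf using fun b : B => mem_iUnion.1 (hBA b.2)
  exact ⟨B, hB, f, fun b b' hbb' => Subtype.ext (hA _ (hf b) (hbb' ▸ hf b')), hf⟩

variable [DecidableEq ι] {j : ι} {s : Set α} {J : Finset ι}

lemma RadoCondition.mem_of_not_update (h : M.RadoCondition A)
    (hJ : M.rk (⋃ i ∈ J, update A j s i) + Fintype.card ι < M.rk M.E + J.card) : j ∈ J := by
  by_contra hj
  rw [biUnion_update_of_notMem hj] at hJ
  exact (h J).not_gt hJ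

lemma RadoCondition.update_diff_singleton_or [M.RankFinite] (h : M.RadoCondition A) {x y : α}
    (hxy : x ≠ y) (j : ι) :
    M.RadoCondition (update A j (A j \ {x})) ∨ M.RadoCondition (update A j (A j \ {y})) := by
  by_contra! hfail
  obtain ⟨hx, hy⟩ := hfail
  simp only [RadoCondition, not_forall, not_le] at hx hy
  obtain ⟨J₁, hJ₁⟩ := hx
  obtain ⟨J₂, hJ₂⟩ := hy
  have hj₁ := h.mem_of_not_update hJ₁
  have hj₂ := h.mem_of_not_update hJ₂
  have hcover : A j ⊆ (A j \ {x}) ∪ (A j \ {y}) := by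
    rw [← sdiff_inter, inter_singleton_eq_empty.2 (by simpa using hxy.symm), sdiff_empty]
  -- Submodularity on the two violating unions contradicts the condition at `J₁ ∪ J₂` and at
  -- `(J₁ ∩ J₂) \ {j}`.
  set U₁ := ⋃ i ∈ J₁, update A j (A j \ {x}) i
  set U₂ := ⋃ i ∈ J₂, update A j (A j \ {y}) i
  have hunion : M.rk M.E + (J₁ ∪ J₂).card ≤ M.rk (U₁ ∪ U₂) + Fintype.card ι :=
    (h _).trans (by grw [rk_mono (biUnion_union_subset_union_update hj₁ hj₂ hcover)])
  have hinter : M.rk M.E + ((J₁ ∩ J₂).erase j).card ≤ M.rk (U₁ ∩ U₂) + Fintype.card ι :=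
    (h _).trans (by grw [rk_mono biUnion_erase_inter_subset_inter_update])
  have hsub := rk_inter_add_rk_union_le (M := M) U₁ U₂
  have hcard := Finset.card_union_add_card_inter J₁ J₂
  have herase := Finset.card_erase_of_mem (Finset.mem_inter.2 ⟨hj₁, hj₂⟩)
  have hpos := Finset.card_pos.2 ⟨j, Finset.mem_inter.2 ⟨hj₁, hj₂⟩⟩
  omega

theorem RadoCondition.hasTransversalBase [M.RankFinite] (hA : ∀ i, (A i).Finite)
    (h : M.RadoCondition A) : M.HasTransversalBase A := by
  induction hn : ∑ i, (A i).ncard using Nat.strong_induction_on generalizing A with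
  | _ n ih =>
  by_cases hsub : ∀ i, (A i).Subsingleton
  · exact h.hasTransversalBase_of_subsingleton hsub
  obtain ⟨j, x, hx, y, hy, hxy⟩ : ∃ j, (A j).Nontrivial := by
    simpa only [not_forall, not_subsingleton_iff] using hsub
  have hdrop : ∀ z ∈ A j, M.RadoCondition (update A j (A j \ {z})) → M.HasTransversalBase A :=
    fun z hz hz' =>
      have hle : update A j (A j \ {z}) ≤ A := update_le_self_iff.2 sdiff_subset
      (ih _ (hn ▸ sum_ncard_update_diff_singleton_lt (hA j) hz) (fun i => (hA i).subset (hle i))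
        hz' rfl).mono hle
  rcases h.update_diff_singleton_or hxy j with h' | h'
  exacts [hdrop x hx h', hdrop y hy h']

end Rado

def IsDoubleTransversal (M : Matroid α) (T : Set α) : Prop :=
  T ⊆ M.E ∧ ∀ B, M.IsBase B → 2 ≤ (B ∩ T).ncard

section DoubleTransversal

variable [M.Finite] {τ : ℕ}

lemma rk_ground_add_ncard_add_le_of_forall_isDoubleTransversal {S : Set α}
    (hτ : ∀ T, M.IsDoubleTransversal T → τ ≤ T.ncard)
    (hS : S ⊆ M.E) (hrS : M.rk S + 2 ≤ M.rk M.E) :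
    M.rk M.E + S.ncard + τ ≤ M.rk S + M.E.ncard + 2 := by
  obtain ⟨T, hT, hTcard, hTB⟩ := exists_subset_ncard_add_eq_of_le_ncard_inter
    (𝓑 := {B | M.IsBase B}) (k := 2) (n := M.rk M.E - M.rk S - 2) (M.ground_finite.sdiff (t := S))
    M.exists_isBase fun B (hB : M.IsBase B) => by
      rw [← inter_sdiff_assoc, inter_eq_left.2 hB.subset_ground]
      have := hB.rk_ground_le_rk_add_ncard_diff S
      omega
  have hτT := hτ T ⟨hT.trans sdiff_subset, hTB⟩
  have hES := ncard_sdiff_add_ncard_of_subset hS M.ground_finite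
  omega

lemma radoCondition_colorClasses [Fintype ι] {c : α → ι} (hc : SurjOn c M.E univ)
    (hτ : ∀ T, M.IsDoubleTransversal T → τ ≤ T.ncard)
    (hk : Fintype.card ι + τ = M.E.ncard + 2) :
    M.RadoCondition fun i => c ⁻¹' {i} ∩ M.E := by
  intro J
  set S := ⋃ i ∈ J, c ⁻¹' {i} ∩ M.E
  have hSE : S ⊆ M.E := iUnion₂_subset fun _ _ => inter_subset_right
  have hJS : J.card ≤ S.ncard := by
    have hJ : (J : Set ι) ⊆ c '' S := fun i hi => by
      obtain ⟨x, hx, rfl⟩ := hc (mem_univ i)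
      exact ⟨x, mem_biUnion hi ⟨rfl, hx⟩, rfl⟩
    rw [← ncard_coe_finset]
    exact (ncard_le_ncard hJ ((M.ground_finite.subset hSE).image c)).trans
      (ncard_image_le (M.ground_finite.subset hSE))
  by_cases hrS : M.rk S + 2 ≤ M.rk M.E
  · have := rk_ground_add_ncard_add_le_of_forall_isDoubleTransversal hτ hSE hrS
    omega
  by_cases hJ : J = Finset.univ
  · have hES : M.E ⊆ S := fun x hx => mem_biUnion (hJ ▸ Finset.mem_univ (c x)) ⟨rfl, hx⟩
    have := rk_mono (M := M) hES
    rw [hJ, Finset.card_univ]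
    omega
  · have := Finset.card_lt_card (Finset.ssubset_univ_iff.2 hJ)
    rw [Finset.card_univ] at this
    omega

end DoubleTransversal

end Matroid

open Matroid in
/-- If `M` is a matroid with `m` elements and rank at least 2, `τ` is the size of
a smallest double transversal of bases of `M` (a set meeting every basis in at least two
elements), and `c` is a colouring of the ground set of `M` using exactly `m - τ + 2` colours,
then `M` has a heterochromatic basis. -/
theorem matroid_heterochromatic_basis {α : Type*} (M : Matroid α) (hfin : M.E.Finite)
    (hrank : ∃ B, M.IsBase B ∧ 2 ≤ B.ncard)
    (τ : ℕ)
    (hτ : τ = sInf {t : ℕ | ∃ T ⊆ M.E, T.ncard = t ∧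
      ∀ B, M.IsBase B → 2 ≤ (B ∩ T).ncard})
    (c : α → Fin (M.E.ncard - τ + 2))
    (hc : Set.SurjOn c M.E Set.univ) :
    ∃ B, M.IsBase B ∧ Set.InjOn c B := by
  have : M.Finite := ⟨hfin⟩
  obtain ⟨B₀, hB₀, hB₀card⟩ := hrank
  have hτ_le : ∀ T, M.IsDoubleTransversal T → τ ≤ T.ncard :=
    fun T ⟨hT, hTB⟩ => hτ ▸ Nat.sInf_le ⟨T, hT, rfl, hTB⟩
  have hτm : τ ≤ M.E.ncard := hτ_le M.E ⟨subset_rfl, fun B hB => by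
    rwa [inter_eq_left.2 hB.subset_ground, hB.ncard_eq_ncard_of_isBase hB₀]⟩
  have hk : Fintype.card (Fin (M.E.ncard - τ + 2)) + τ = M.E.ncard + 2 := by
    rw [Fintype.card_fin]
    omega
  obtain ⟨B, hB, f, hf, hfB⟩ := (radoCondition_colorClasses hc hτ_le hk).hasTransversalBase
    fun _ => hfin.subset inter_subset_right
  refine ⟨B, hB, fun b hb b' hb' hbb' => ?_⟩
  have hcf : ∀ b : B, c b = f b := fun b => (hfB b).1
  exact congrArg Subtype.val
    (hf (a₁ := ⟨b, hb⟩) (a₂ := ⟨b', hb'⟩) (by rw [← hcf, ← hcf, hbb']))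
end

section
/- Let M be a matroid of rank at least 2 with ground set E, let Y ⊆ E be a set that is not a double transversal of bases, and suppose some basis R meets Y in exactly one element y and contains an element x ∉ Y with c(x) = c(y) for a coloring c injective on E \ Y. If the set Y ∪ {x} is also not a double transversal of bases, witnessed by a basis S meeting Y ∪ {x} in at most one element, and S is not heterochromatic, then M has a heterochromatic basis of the form (R ∪ {z}) \ {x} or (R ∪ {z}) \ {y} for some z ∈ S \ (Y ∪ {x}). -/
open Set

/-!
A colour clash inside `S` forces `S` to meet `Y`, in a single element `s`. If every element of
`S \ {s}` were spanned both by `R \ {x}` and by `R \ {y}`, then `x` would not be spanned by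
`S \ {s}`, so `insert x (S \ {s})` would be a basis contained in the closure of `R \ {y}`,
which misses `y`. Hence some `z ∈ S \ {s}` can replace `x` or `y` in `R`; the colours stay
distinct because `R \ {y}` avoids `Y`, and `y` takes over the colour of the removed `x`.
-/

theorem Set.InjOn.insert_sdiff_singleton_of_apply_eq {α β : Type*} {c : α → β} {A : Set α}
    {x y : α} (hinj : InjOn c A) (hxA : x ∈ A) (hc : c x = c y) :
    InjOn c (insert y (A \ {x})) := by
  by_cases hy : y ∈ A \ {x}
  · rw [insert_eq_of_mem hy]
    exact hinj.mono sdiff_subset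
  rw [injOn_insert hy]
  refine ⟨hinj.mono sdiff_subset, ?_⟩
  rintro ⟨w, ⟨hwA, hwx⟩, hw⟩
  exact hwx (hinj hwA hxA (hw.trans hc.symm))

theorem Set.InjOn.inter_nonempty_of_not_injOn {α β : Type*} {c : α → β} {A S Y : Set α}
    (hinj : InjOn c (A \ Y)) (hSA : S ⊆ A) (hS : ¬InjOn c S) : (S ∩ Y).Nonempty := by
  contrapose! hS
  have hSAY : S ⊆ A \ Y := fun w hw => ⟨hSA hw, fun hwY => hS.subset ⟨hw, hwY⟩⟩
  exact hinj.mono hSAY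

namespace Matroid

variable {α : Type*} {M : Matroid α} {R S : Set α}

theorem IsBase.exists_mem_sdiff_notMem_closure_sdiff_or (hR : M.IsBase R) (hS : M.IsBase S)
    {s x y : α} (hs : s ∈ S) (hxR : x ∈ R) (hyR : y ∈ R) (hxy : x ≠ y) :
    ∃ z ∈ S \ {s}, z ∉ M.closure (R \ {x}) ∨ z ∉ M.closure (R \ {y}) := by
  by_contra! h
  have hx : x ∉ M.closure (S \ {s}) := fun hx =>
    hR.indep.notMem_closure_sdiff_of_mem hxR
      (closure_subset_closure_of_subset_closure (fun z hz => (h z hz).1) hx)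
  have hbase : M.IsBase (insert x (S \ {s})) :=
    hS.exchange_base_of_notMem_closure hs hx (hR.subset_ground hxR)
  have hspan : insert x (S \ {s}) ⊆ M.closure (R \ {y}) :=
    insert_subset (M.subset_closure _ (sdiff_subset.trans hR.subset_ground) ⟨hxR, hxy⟩)
      fun z hz => (h z hz).2
  have hy : y ∈ M.closure (insert x (S \ {s})) := hbase.closure_eq ▸ hR.subset_ground hyR
  exact hR.indep.notMem_closure_sdiff_of_mem hyR (closure_subset_closure_of_subset_closure hspan hy)

theorem IsBase.union_singleton_sdiff_isBase (hR : M.IsBase R) {x z : α} (hxR : x ∈ R)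
    (hzx : z ≠ x) (hz : z ∉ M.closure (R \ {x})) (hzE : z ∈ M.E) :
    M.IsBase ((R ∪ {z}) \ {x}) := by
  rw [union_singleton, insert_sdiff_of_notMem _ (notMem_singleton_iff.2 hzx)]
  exact hR.exchange_base_of_notMem_closure hxR hz hzE

end Matroid

theorem matroid_exchange_heterochromatic_general {α Colors : Type*} (M : Matroid α)
    (hfin : M.E.Finite)
    (c : α → Colors) (Y : Set α)
    (hinj : Set.InjOn c (M.E \ Y))
    (R : Set α) (hR : M.IsBase R) (y : α) (hRy : R ∩ Y = {y})
    (x : α) (hxR : x ∈ R) (hxY : x ∉ Y) (hxy : x ≠ y) (hcxy : c x = c y)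
    (S : Set α) (hS : M.IsBase S) (hSZ : (S ∩ (Y ∪ {x})).ncard ≤ 1)
    (hShet : ¬ Set.InjOn c S) :
    ∃ z ∈ S \ (Y ∪ {x}),
      (M.IsBase ((R ∪ {z}) \ {x}) ∧ Set.InjOn c ((R ∪ {z}) \ {x})) ∨
      (M.IsBase ((R ∪ {z}) \ {y}) ∧ Set.InjOn c ((R ∪ {z}) \ {y})) := by
  obtain ⟨s, hsS, hsY⟩ := hinj.inter_nonempty_of_not_injOn hS.subset_ground hShet
  obtain ⟨hyR, hyY⟩ : y ∈ R ∩ Y := hRy.symm.subset rfl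
  obtain ⟨z, ⟨hzS, hzs⟩, hz⟩ := hR.exists_mem_sdiff_notMem_closure_sdiff_or hS hsS hxR hyR hxy
  have hzYx : z ∉ Y ∪ {x} := fun h => hzs <|
    (ncard_le_one_iff (hfin.subset (inter_subset_left.trans hS.subset_ground))).1 hSZ
      ⟨hzS, h⟩ ⟨hsS, Or.inl hsY⟩
  have hzEY : z ∈ M.E \ Y := ⟨hS.subset_ground hzS, fun h => hzYx (Or.inl h)⟩
  have hzx : z ≠ x := fun h => hzYx (Or.inr h)
  have hzy : z ≠ y := by rintro rfl; exact hzEY.2 hyY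
  have hRzy : (R ∪ {z}) \ {y} ⊆ M.E \ Y := by
    rintro w ⟨hw | rfl, hwy⟩
    · exact ⟨hR.subset_ground hw, fun hwY => hwy (hRy.subset ⟨hw, hwY⟩)⟩
    · exact hzEY
  have hRzx : (R ∪ {z}) \ {x} ⊆ insert y ((M.E \ Y) \ {x}) := by
    rintro w ⟨hw, hwx⟩
    obtain rfl | hwy := eq_or_ne w y
    · exact mem_insert w _
    · exact Or.inr ⟨hRzy ⟨hw, hwy⟩, hwx⟩
  refine ⟨z, ⟨hzS, hzYx⟩, ?_⟩
  rcases hz with hzclx | hzcly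
  · exact .inl ⟨hR.union_singleton_sdiff_isBase hxR hzx hzclx hzEY.1,
      (hinj.insert_sdiff_singleton_of_apply_eq ⟨hR.subset_ground hxR, hxY⟩ hcxy).mono hRzx⟩
  · exact .inr ⟨hR.union_singleton_sdiff_isBase hyR hzy hzcly hzEY.1, hinj.mono hRzy⟩

/-- the exchange step in the proof of the matroid theorem. -/
theorem matroid_exchange_heterochromatic {α Colors : Type*} (M : Matroid α)
    (hfin : M.E.Finite) (hrank : ∃ B, M.IsBase B ∧ 2 ≤ B.ncard)
    (c : α → Colors) (Y : Set α) (hY : Y ⊆ M.E)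
    (hinj : Set.InjOn c (M.E \ Y))
    (R : Set α) (hR : M.IsBase R) (y : α) (hRy : R ∩ Y = {y})
    (x : α) (hxR : x ∈ R) (hxY : x ∉ Y) (hxy : x ≠ y) (hcxy : c x = c y)
    (S : Set α) (hS : M.IsBase S) (hSZ : (S ∩ (Y ∪ {x})).ncard ≤ 1)
    (hShet : ¬ Set.InjOn c S) :
    ∃ z ∈ S \ (Y ∪ {x}),
      (M.IsBase ((R ∪ {z}) \ {x}) ∧ Set.InjOn c ((R ∪ {z}) \ {x})) ∨
      (M.IsBase ((R ∪ {z}) \ {y}) ∧ Set.InjOn c ((R ∪ {z}) \ {y})) :=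
  matroid_exchange_heterochromatic_general M hfin c Y hinj R hR y hRy x hxR hxY hxy hcxy S hS hSZ
    hShet
end

section
/- Let P be a set of n ≥ 3 points in convex position in the plane (in general position). If R is a plane (non-self-intersecting) spanning tree of the complete geometric graph on P, then at least two edges of R are edges of the boundary of the convex hull of P. -/
open Set

/-- A plane (non-self-intersecting) spanning tree of the complete geometric graph on a
finite point set `P`: a tree on the vertices of `P` whose straight-line edges pairwise do
not cross (edges with no common endpoint have disjoint open segments). -/
def IsPlaneSpanningTree {P : Finset (EuclideanSpace ℝ (Fin 2))}
    (T : SimpleGraph ↥P) : Prop :=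
  T.IsTree ∧ ∀ a b x y : ↥P, T.Adj a b → T.Adj x y →
    a ≠ x → a ≠ y → b ≠ x → b ≠ y →
    openSegment ℝ (a : EuclideanSpace ℝ (Fin 2)) (b : EuclideanSpace ℝ (Fin 2)) ∩
      openSegment ℝ (x : EuclideanSpace ℝ (Fin 2)) (y : EuclideanSpace ℝ (Fin 2)) = ∅

/-- `ab` is an edge of the boundary of the convex hull of `P`: the line through `a` and `b`
supports `P`, with all other points of `P` strictly on one side. -/
def IsHullEdge (P : Finset (EuclideanSpace ℝ (Fin 2)))
    (a b : EuclideanSpace ℝ (Fin 2)) : Prop :=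
  a ∈ P ∧ b ∈ P ∧ a ≠ b ∧
    ∃ f : EuclideanSpace ℝ (Fin 2) →ₗ[ℝ] ℝ, f a = f b ∧
      ∀ p ∈ P, p ≠ a → p ≠ b → f p < f a

/-!
List the points counterclockwise along the hull: sorting them by angle around the lowest point
makes every triple from that point counterclockwise, and convex position upgrades this to every
increasing triple. Consecutive points then span hull edges. If a tree edge joins `i < j` with
`j ≠ i + 1`, the neighbour of `i + 1` lies in `[i, j]`, for otherwise the two edges cross; so the
tree has an edge nested strictly inside `[i, j]` or equal to `(i, i + 1)`, and descending ends at
a consecutive edge. Rotating the cyclic order so that this edge becomes the closing edge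
`(last, 0)` and descending again yields a second, different one.
-/

local notation "ℝ²" => EuclideanSpace ℝ (Fin 2)

/-- Twice the signed area of the triangle `pqr`; positive iff `p, q, r` turn counterclockwise. -/
def orient (p q r : ℝ²) : ℝ := (q 0 - p 0) * (r 1 - p 1) - (q 1 - p 1) * (r 0 - p 0)

lemma orient_rotate (p q r : ℝ²) : orient p q r = orient q r p := by unfold orient; ring

lemma orient_swap (p q r : ℝ²) : orient p q r = -orient p r q := by unfold orient; ring

lemma orient_self_right (p q : ℝ²) : orient p q q = 0 := by unfold orient; ring

lemma collinear_of_orient_eq_zero {p q r : ℝ²} (hpq : p ≠ q) (h : orient p q r = 0) :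
    Collinear ℝ {p, q, r} := by
  have hu : (q 0 - p 0) ^ 2 + (q 1 - p 1) ^ 2 ≠ 0 := by
    intro h0
    refine hpq (PiLp.ext fun i => ?_)
    fin_cases i <;> simp <;> nlinarith [sq_nonneg (q 0 - p 0), sq_nonneg (q 1 - p 1)]
  rw [collinear_iff_of_mem (by simp : p ∈ ({p, q, r} : Set ℝ²))]
  refine ⟨q - p, ?_⟩
  rintro x (rfl | rfl | rfl)
  · exact ⟨0, by simp⟩
  · exact ⟨1, by simp⟩
  · refine ⟨((x 0 - p 0) * (q 0 - p 0) + (x 1 - p 1) * (q 1 - p 1)) /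
      ((q 0 - p 0) ^ 2 + (q 1 - p 1) ^ 2), PiLp.ext fun i => ?_⟩
    simp only [orient] at h
    fin_cases i <;> simp <;> field_simp
    · linear_combination -(q 1 - p 1) * h
    · linear_combination (q 0 - p 0) * h

lemma orient_ne_zero_of_not_collinear {p q r : ℝ²} (h : ¬Collinear ℝ {p, q, r}) :
    orient p q r ≠ 0 := by
  rcases eq_or_ne p q with rfl | hpq
  · simp [collinear_pair] at h
  · exact fun h0 => h (collinear_of_orient_eq_zero hpq h0)

lemma mem_convexHull_of_orient_pos {a b c x : ℝ²} (hab : 0 < orient a b x)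
    (hbc : 0 < orient b c x) (hca : 0 < orient c a x) : x ∈ convexHull ℝ {a, b, c} := by
  set w : Fin 3 → ℝ := ![orient b c x, orient c a x, orient a b x]
  have hw : 0 < ∑ i, w i := by simp [w, Fin.sum_univ_three]; linarith
  have hx : Finset.univ.centerMass w ![a, b, c] = x := by
    rw [Finset.centerMass, inv_smul_eq_iff₀ hw.ne']
    ext i
    fin_cases i <;> simp [w, Fin.sum_univ_three, orient] <;> ring
  rw [← hx]
  refine Finset.centerMass_mem_convexHull _ (fun i _ => ?_) hw (fun i _ => ?_)
  · fin_cases i <;> simp [w] <;> linarith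
  · fin_cases i <;> simp

lemma openSegment_inter_nonempty_of_orient {a b x y : ℝ²} (hx : orient a b x < 0)
    (hy : 0 < orient a b y) (ha : 0 < orient x y a) (hb : orient x y b < 0) :
    (openSegment ℝ a b ∩ openSegment ℝ x y).Nonempty := by
  set s := orient x y a / (orient x y a - orient x y b)
  set t := orient a b x / (orient a b x - orient a b y)
  have hs : s ∈ Ioo (0 : ℝ) 1 :=
    ⟨div_pos ha (by linarith), (div_lt_one (by linarith)).2 (by linarith)⟩
  have ht : t ∈ Ioo (0 : ℝ) 1 :=
    ⟨div_pos_of_neg_of_neg hx (by linarith), (div_lt_one_of_neg (by linarith)).2 (by linarith)⟩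
  refine ⟨AffineMap.lineMap a b s, ?_, ?_⟩
  · rw [openSegment_eq_image_lineMap]; exact ⟨s, hs, rfl⟩
  · rw [openSegment_eq_image_lineMap]
    refine ⟨t, ht, ?_⟩
    have h1 : orient x y a - orient x y b ≠ 0 := by linarith
    have h2 : orient a b x - orient a b y ≠ 0 := by linarith
    ext i
    fin_cases i <;> simp [s, t, AffineMap.lineMap_apply_module, orient] at h1 h2 ⊢ <;>
      field_simp <;> ring

lemma orient_pos_trans {p q r s : ℝ²} (hq : toLex (p 1, p 0) < toLex (q 1, q 0))
    (hr : toLex (p 1, p 0) < toLex (r 1, r 0)) (hs : toLex (p 1, p 0) < toLex (s 1, s 0))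
    (hqr : 0 < orient p q r) (hrs : 0 < orient p r s) : 0 < orient p q s := by
  simp only [Prod.Lex.toLex_lt_toLex] at hq hr hs
  have hr1 : p 1 < r 1 := by
    rcases hr with hr | ⟨hr, hr'⟩
    · exact hr
    · unfold orient at hqr; rw [← hr] at hqr; rcases hq with hq | ⟨hq, _⟩ <;> nlinarith
  have key : (r 1 - p 1) * orient p q s =
      (q 1 - p 1) * orient p r s + (s 1 - p 1) * orient p q r := by unfold orient; ring
  refine pos_of_mul_pos_right (a := r 1 - p 1) ?_ (by linarith)
  rw [key]
  rcases hq with hq | ⟨hq, hq'⟩ <;> rcases hs with hs | ⟨hs, hs'⟩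
  · nlinarith
  · nlinarith
  · nlinarith
  · unfold orient at hrs; rw [← hs] at hrs; nlinarith

lemma isHullEdge_of_orient_pos {P : Finset ℝ²} {a b : ℝ²} (ha : a ∈ P) (hb : b ∈ P)
    (hab : a ≠ b) (h : ∀ p ∈ P, p ≠ a → p ≠ b → 0 < orient a b p) : IsHullEdge P a b := by
  refine ⟨ha, hb, hab, innerₛₗ ℝ !₂[b 1 - a 1, a 0 - b 0], ?_, fun p hp hpa hpb => ?_⟩
  · simp [PiLp.inner_apply, Fin.sum_univ_two]; ring
  · have := h p hp hpa hpb
    simp [PiLp.inner_apply, Fin.sum_univ_two, orient] at this ⊢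
    linarith

def IsConvexOrder {n : ℕ} (v : Fin n → ℝ²) : Prop :=
  ∀ ⦃a b c⦄, a < b → b < c → 0 < orient (v a) (v b) (v c)

namespace IsConvexOrder

variable {n : ℕ}

lemma comp_add_one {v : Fin (n + 1) → ℝ²} (hv : IsConvexOrder v) :
    IsConvexOrder fun i => v (i + 1) := by
  intro a b c hab hbc
  have ha : a < Fin.last n := hab.trans (hbc.trans_le (Fin.le_last c))
  have hb : b < Fin.last n := hbc.trans_le (Fin.le_last c)
  rcases (Fin.le_last c).lt_or_eq with hc | rfl
  · refine hv ?_ ?_ <;>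
      simp only [Fin.lt_def, Fin.val_add_one_of_lt, *] at hab hbc ⊢ <;> omega
  · show 0 < orient (v (a + 1)) (v (b + 1)) (v (Fin.last n + 1))
    rw [Fin.last_add_one, ← orient_rotate]
    refine hv ?_ ?_ <;>
      simp only [Fin.lt_def, Fin.val_add_one_of_lt, Fin.val_zero, *] at hab ⊢ <;> omega

lemma comp_add_right {v : Fin (n + 1) → ℝ²} (hv : IsConvexOrder v) (s : Fin (n + 1)) :
    IsConvexOrder fun i => v (i + s) := by
  induction s using Fin.induction with
  | zero => simpa using hv
  | succ i ih =>
    convert ih.comp_add_one using 3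
    rw [← Fin.coeSucc_eq_succ]
    abel

lemma orient_castSucc_succ_pos {v : Fin (n + 1) → ℝ²} (hv : IsConvexOrder v) (c : Fin n)
    {k : Fin (n + 1)} (hk : k ≠ c.castSucc) (hk' : k ≠ c.succ) :
    0 < orient (v c.castSucc) (v c.succ) (v k) := by
  rcases lt_or_gt_of_ne hk with hlt | hgt
  · rw [← orient_rotate]
    exact hv hlt Fin.castSucc_lt_succ
  · refine hv Fin.castSucc_lt_succ (lt_of_le_of_ne ?_ hk'.symm)
    simpa [Fin.lt_def, Fin.le_def] using hgt

lemma openSegment_inter_nonempty {v : Fin n → ℝ²} (hv : IsConvexOrder v) {a b c d : Fin n}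
    (hab : a < b) (hbc : b < c) (hcd : c < d) :
    (openSegment ℝ (v a) (v c) ∩ openSegment ℝ (v b) (v d)).Nonempty := by
  refine openSegment_inter_nonempty_of_orient ?_ (hv (hab.trans hbc) hcd) ?_ ?_
  · rw [orient_swap]; exact neg_neg_of_pos (hv hab hbc)
  · rw [← orient_rotate]; exact hv hab (hbc.trans hcd)
  · rw [orient_swap]; exact neg_neg_of_pos (hv hbc hcd)

end IsConvexOrder

lemma isHullEdge_castSucc_succ {P : Finset ℝ²} {n : ℕ} {e : Fin (n + 1) ≃ P}
    (he : IsConvexOrder fun i => (e i : ℝ²)) (c : Fin n) :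
    IsHullEdge P (e c.castSucc) (e c.succ) := by
  refine isHullEdge_of_orient_pos (e _).2 (e _).2
    (Subtype.val_injective.ne (e.injective.ne Fin.castSucc_lt_succ.ne)) fun p hp hpa hpb => ?_
  obtain ⟨k, rfl⟩ : ∃ k, (e k : ℝ²) = p := ⟨e.symm ⟨p, hp⟩, by simp⟩
  exact he.orient_castSucc_succ_pos c (by rintro rfl; exact hpa rfl) (by rintro rfl; exact hpb rfl)

lemma isConvexOrder_of_fan {P : Finset ℝ²} {n : ℕ}
    (hgen : ∀ p ∈ P, ∀ q ∈ P, ∀ r ∈ P, p ≠ q → q ≠ r → p ≠ r →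
      ¬ Collinear ℝ ({p, q, r} : Set ℝ²))
    (hconv : ∀ p ∈ P, p ∉ convexHull ℝ ((↑P \ {p}) : Set ℝ²)) (e : Fin (n + 1) ≃ P)
    (hfan : ∀ ⦃b c⦄, 0 < b → b < c → 0 < orient (e 0) (e b) (e c)) :
    IsConvexOrder fun i => (e i : ℝ²) := by
  have hne {i j} (h : i ≠ j) : (e i : ℝ²) ≠ e j := Subtype.val_injective.ne (e.injective.ne h)
  intro a b c hab hbc
  rcases (Fin.zero_le a).lt_or_eq with ha | rfl
  swap; · exact hfan hab hbc
  by_contra! hneg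
  have hacb : 0 < orient (e a) (e c) (e b) := by
    rw [orient_swap, neg_pos]
    refine hneg.lt_of_ne (orient_ne_zero_of_not_collinear ?_)
    exact hgen _ (e a).2 _ (e b).2 _ (e c).2 (hne hab.ne) (hne hbc.ne) (hne (hab.trans hbc).ne)
  have hmem : (e b : ℝ²) ∈ convexHull ℝ ({(e 0 : ℝ²), (e a : ℝ²), (e c : ℝ²)} : Set ℝ²) :=
    mem_convexHull_of_orient_pos (hfan ha hab) hacb
      (by rw [orient_rotate]; exact hfan (ha.trans hab) hbc)
  refine hconv _ (e b).2 (convexHull_mono ?_ hmem)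
  rintro _ (rfl | rfl | rfl) <;> refine ⟨(e _).2, ?_⟩ <;> simp only [mem_singleton_iff]
  · exact hne (ha.trans hab).ne
  · exact hne hab.ne
  · exact hne hbc.ne'

lemma exists_isConvexOrder {P : Finset ℝ²} {n : ℕ} (hn : P.card = n + 1)
    (hgen : ∀ p ∈ P, ∀ q ∈ P, ∀ r ∈ P, p ≠ q → q ≠ r → p ≠ r →
      ¬ Collinear ℝ ({p, q, r} : Set ℝ²))
    (hconv : ∀ p ∈ P, p ∉ convexHull ℝ ((↑P \ {p}) : Set ℝ²)) :
    ∃ e : Fin (n + 1) ≃ P, IsConvexOrder fun i => (e i : ℝ²) := by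
  classical
  obtain ⟨p₀, hp₀, hmin⟩ := P.exists_min_image (fun p => toLex (p 1, p 0))
    (Finset.card_pos.1 (by omega))
  have hlow : ∀ q ∈ P, q ≠ p₀ → toLex (p₀ 1, p₀ 0) < toLex (q 1, q 0) := by
    intro q hq hqp
    refine (hmin q hq).lt_of_ne fun h => hqp (PiLp.ext fun i => ?_)
    simp only [toLex_inj, Prod.mk.injEq] at h
    fin_cases i <;> simp [h]
  -- the angular order around the lowest point `p₀`, with `p₀` itself first
  let r : P → P → Prop := fun q s => 0 < orient p₀ q s ∨ ((q : ℝ²) = p₀ ∧ (s : ℝ²) ≠ p₀)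
  have hr_ne {q s : P} (h : 0 < orient p₀ q s) : (q : ℝ²) ≠ p₀ ∧ (s : ℝ²) ≠ p₀ := by
    constructor <;> rintro h' <;> simp [h', orient] at h
  have : IsStrictTotalOrder P r :=
    { irrefl := fun q => by simp [r, orient_self_right]
      trans := by
        rintro q s t (hqs | ⟨hq, hs⟩) (hst | ⟨hs', ht⟩)
        · left
          obtain ⟨hq, hs⟩ := hr_ne hqs
          exact orient_pos_trans (hlow _ q.2 hq) (hlow _ s.2 hs) (hlow _ t.2 (hr_ne hst).2) hqs hst
        · exact absurd hs' (hr_ne hqs).2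
        · exact Or.inr ⟨hq, (hr_ne hst).2⟩
        · exact absurd hs' hs
      trichotomous := by
        intro q s hqs hsq
        by_contra hne
        by_cases hq : (q : ℝ²) = p₀
        · exact hqs (Or.inr ⟨hq, fun hs => hne (Subtype.ext (hq.trans hs.symm))⟩)
        by_cases hs : (s : ℝ²) = p₀
        · exact hsq (Or.inr ⟨hs, hq⟩)
        have h0 : orient p₀ q s ≠ 0 := orient_ne_zero_of_not_collinear <|
          hgen _ hp₀ _ q.2 _ s.2 (Ne.symm hq) (Subtype.val_injective.ne hne) (Ne.symm hs)
        rcases h0.lt_or_gt with h | h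
        · exact hsq (Or.inl (by rw [orient_swap]; linarith))
        · exact hqs (Or.inl h) }
  let := linearOrderOfSTO r
  let e := Fintype.orderIsoFinOfCardEq P (by rw [Fintype.card_coe, hn])
  have he₀ : (e 0 : ℝ²) = p₀ := by
    by_contra h
    have : e.symm ⟨p₀, hp₀⟩ < e.symm (e 0) := e.symm.lt_iff_lt.2 (Or.inr ⟨rfl, h⟩)
    simp at this
  refine ⟨e.toEquiv, isConvexOrder_of_fan hgen hconv e.toEquiv fun b c hb hbc => ?_⟩
  rcases e.lt_iff_lt.2 hbc with h | ⟨h, -⟩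
  · rwa [← he₀] at h
  · exact absurd (Subtype.val_injective (h.trans he₀.symm)) (e.injective.ne hb.ne')

def IsNoncrossing {V : Type*} (p : V → ℝ²) (G : SimpleGraph V) : Prop :=
  ∀ a b x y, G.Adj a b → G.Adj x y → a ≠ x → a ≠ y → b ≠ x → b ≠ y →
    openSegment ℝ (p a) (p b) ∩ openSegment ℝ (p x) (p y) = ∅

namespace IsNoncrossing

variable {V : Type*} {p : V → ℝ²} {G : SimpleGraph V}

lemma mem_Icc_of_adj {N : ℕ} (hG : IsNoncrossing p G) {e : Fin N ≃ V}
    (hv : IsConvexOrder fun i => p (e i)) {x y k m : Fin N} (hxy : G.Adj (e x) (e y))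
    (hxk : x < k) (hky : k < y) (hkm : G.Adj (e k) (e m)) : m ∈ Icc x y := by
  have hne {i j : Fin N} (h : i < j) : e i ≠ e j := e.injective.ne h.ne
  constructor
  · by_contra! hmx
    refine (hv.openSegment_inter_nonempty hmx hxk hky).ne_empty ?_
    exact hG _ _ _ _ hkm.symm hxy (hne hmx) (hne (hmx.trans (hxk.trans hky)))
      (hne hxk).symm (hne hky)
  · by_contra! hym
    refine (hv.openSegment_inter_nonempty hxk hky hym).ne_empty ?_
    exact hG _ _ _ _ hxy hkm (hne hxk) (hne (hxk.trans (hky.trans hym)))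
      (hne hky).symm (hne hym)

variable {n : ℕ} {e : Fin (n + 1) ≃ V}

lemma exists_adj_castSucc_succ_of_adj (hG : IsNoncrossing p G)
    (hv : IsConvexOrder fun i => p (e i)) (hnbr : ∀ u, ∃ w, G.Adj u w) {x y : Fin (n + 1)}
    (hxy : x < y) (hadj : G.Adj (e x) (e y)) :
    ∃ c : Fin n, G.Adj (e c.castSucc) (e c.succ) := by
  induction hd : (y : ℕ) - x using Nat.strong_induction_on generalizing x y with
  | _ d ih =>
  rw [Fin.lt_def] at hxy
  have hxn : (x : ℕ) < n := by omega
  by_cases hcons : (y : ℕ) = x + 1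
  · exact ⟨⟨x, hxn⟩, by convert hadj <;> ext <;> simp [hcons]⟩
  set k : Fin (n + 1) := ⟨x + 1, by omega⟩
  have hxk : x < k := by simp [Fin.lt_def, k]
  have hky : k < y := by simp [Fin.lt_def, k]; omega
  obtain ⟨w, hkw⟩ := hnbr (e k)
  obtain ⟨m, rfl⟩ := e.surjective w
  obtain ⟨hxm, hmy⟩ := hG.mem_Icc_of_adj hv hadj hxk hky hkw
  rcases lt_trichotomy m k with hmk | rfl | hkm
  · obtain rfl : m = x := le_antisymm (Fin.le_def.2 (by have : (m : ℕ) < x + 1 := hmk; omega)) hxm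
    exact ⟨⟨m, hxn⟩, hkw.symm⟩
  · exact (G.loopless.irrefl _ hkw).elim
  · have : (m : ℕ) ≤ y := hmy
    exact ih (m - k) (by simp [k]; omega) hkm hkw rfl

lemma exists_adj_castSucc_succ (hG : IsNoncrossing p G) (hv : IsConvexOrder fun i => p (e i))
    (hnbr : ∀ u, ∃ w, G.Adj u w) : ∃ c : Fin n, G.Adj (e c.castSucc) (e c.succ) := by
  obtain ⟨w, hw⟩ := hnbr (e 0)
  obtain ⟨m, rfl⟩ := e.surjective w
  have hm : m ≠ 0 := by rintro rfl; exact G.loopless.irrefl _ hw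
  exact hG.exists_adj_castSucc_succ_of_adj hv hnbr (Fin.pos_iff_ne_zero.2 hm) hw

end IsNoncrossing

lemma sym2_castSucc_succ_ne_last_zero {n : ℕ} (hn : 2 ≤ n) (c : Fin n) :
    s(c.castSucc, c.succ) ≠ s(Fin.last n, 0) := by
  rw [Ne, Sym2.eq_iff]
  rintro (⟨h, -⟩ | ⟨h1, h2⟩)
  · exact (Fin.castSucc_lt_last c).ne h
  · simp [Fin.ext_iff] at h1 h2
    omega

/-- if `P` is a set of `n ≥ 3` points in convex position (and general position)
in the plane and `R` is a plane spanning tree of the complete geometric graph on `P`, then at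
least two edges of `R` are edges of the boundary of the convex hull of `P`. -/
theorem plane_tree_two_hull_edges (P : Finset (EuclideanSpace ℝ (Fin 2)))
    (hcard : 3 ≤ P.card)
    (hgen : ∀ p ∈ P, ∀ q ∈ P, ∀ r ∈ P, p ≠ q → q ≠ r → p ≠ r →
      ¬ Collinear ℝ ({p, q, r} : Set (EuclideanSpace ℝ (Fin 2))))
    (hconv : ∀ p ∈ P, p ∉ convexHull ℝ ((↑P \ {p}) : Set (EuclideanSpace ℝ (Fin 2))))
    (R : SimpleGraph ↥P) (hR : IsPlaneSpanningTree R) :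
    ∃ a b x y : ↥P, R.Adj a b ∧ R.Adj x y ∧ s(a, b) ≠ s(x, y) ∧
      IsHullEdge P a b ∧ IsHullEdge P x y := by
  obtain ⟨n, hn⟩ : ∃ n, P.card = n + 1 := ⟨P.card - 1, by omega⟩
  obtain ⟨e, he⟩ := exists_isConvexOrder hn hgen hconv
  have : Nontrivial P := Fintype.one_lt_card_iff_nontrivial.1 (by rw [Fintype.card_coe]; omega)
  have hnbr := hR.1.connected.preconnected.exists_adj_of_nontrivial
  obtain ⟨c, hc⟩ := IsNoncrossing.exists_adj_castSucc_succ hR.2 he hnbr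
  -- rotated, the order has the edge just found as its closing edge `(last, 0)`
  let e' := (Equiv.addRight c.succ).trans e
  have he' : IsConvexOrder fun i => (e' i : ℝ²) := he.comp_add_right c.succ
  obtain ⟨c', hc'⟩ := IsNoncrossing.exists_adj_castSucc_succ hR.2 he' hnbr
  have hlast : e' (Fin.last n) = e c.castSucc := by
    simp only [e', Equiv.trans_apply, Equiv.coe_addRight, ← Fin.coeSucc_eq_succ]
    rw [← add_assoc, add_comm _ c.castSucc, add_assoc, Fin.last_add_one, add_zero]
  have hzero : e' 0 = e c.succ := by simp [e']
  refine ⟨_, _, _, _, hc, hc', ?_, isHullEdge_castSucc_succ he c, isHullEdge_castSucc_succ he' c'⟩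
  rw [← hlast, ← hzero, ← Sym2.map_mk, ← Sym2.map_mk]
  exact ((Sym2.map.injective e'.injective).ne (sym2_castSucc_succ_ne_last_zero (by omega) c')).symm
end

section
/- Let G be a complete geometric graph on n ≥ 3 points in general position. If c is a coloring of the edges of G using exactly C(n,2) - n + 2 colors, then G contains a plane spanning tree all of whose edges have pairwise distinct colors. -/
/-!
Keep one edge of each colour. The other `C(n,2) - k = n - 2` edges cannot connect the `n`
points, so some nontrivial bipartition `X` of `P` is crossed by none of them, and it suffices to
find a plane spanning tree all of whose edges cross `X`. For that, let `v` be an extreme point of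
`P`, say `v ∉ X`, and order the other points by the direction in which `v` sees them. Join `v` to
every point of `X`, and every other point `r` to the point of `X` nearest below `r` in this order
(or to the lowest point of `X` if none is below). The spokes and these edges occupy
non-overlapping angular sectors at `v`, so no two of them cross.
-/

open Set

local notation "ℝ²" => EuclideanSpace ℝ (Fin 2)

namespace GeometricGraph

section Order

variable {α : Type*} [LinearOrder α]

theorem lt_min_or_max_lt_of_notMem_Ioo {a b x : α} (h : x ∉ Ioo (min a b) (max a b))
    (ha : x ≠ a) (hb : x ≠ b) : x < min a b ∨ max a b < x := by
  grind

theorem max_lt_min_or_max_lt_min {a a' b b' : α}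
    (hb' : b' < min a b ∨ max a b < b') (hb : b < min a' b' ∨ max a' b' < b)
    (hbelow : b < a' → b' < a') (hbelow' : b' < a → b < a) :
    max a b < min a' b' ∨ max a' b' < min a b := by
  grind

theorem exists_nearest_below_or_min {ι : Type*} (o : ι → α) {Y : Set ι} (hfin : Y.Finite)
    (hY : Y.Nonempty) (a : α) :
    ∃ b ∈ Y, (∀ b' ∈ Y, o b' ∉ Ioo (min a (o b)) (max a (o b))) ∧
      ((∃ b' ∈ Y, o b' < a) → o b < a) := by
  by_cases hbelow : ∃ b' ∈ Y, o b' < a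
  · obtain ⟨b, ⟨hbY, hba⟩, hmax⟩ :=
      exists_max_image {b ∈ Y | o b < a} o (hfin.subset fun _ h => h.1) hbelow
    refine ⟨b, hbY, fun b' hb' ⟨h₁, h₂⟩ => ?_, fun _ => hba⟩
    rw [min_eq_right hba.le] at h₁
    rw [max_eq_left hba.le] at h₂
    exact (hmax b' ⟨hb', h₂⟩).not_gt h₁
  · simp only [not_exists, not_and, not_lt] at hbelow
    obtain ⟨b, hbY, hmin⟩ := exists_min_image Y o hfin hY
    refine ⟨b, hbY, fun b' hb' ⟨_, h₂⟩ => ?_, fun ⟨b', hb', h⟩ => ((hbelow b' hb').not_gt h).elim⟩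
    rw [max_eq_right (hbelow b hbY)] at h₂
    exact (hmin b' hb').not_gt h₂

end Order

section ParentGraph

variable {V : Type*} (root : V) (p : V → V)

def parentGraph : SimpleGraph V :=
  SimpleGraph.fromEdgeSet ((fun x => s(x, p x)) '' {root}ᶜ)

variable {root p}

theorem parentGraph_adj {a b : V} :
    (parentGraph root p).Adj a b ↔ a ≠ b ∧ (a ≠ root ∧ p a = b ∨ b ≠ root ∧ p b = a) := by
  simp only [parentGraph, SimpleGraph.fromEdgeSet_adj, mem_image, mem_compl_singleton_iff,
    Sym2.eq_iff]
  constructor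
  · rintro ⟨⟨x, hx, ⟨rfl, rfl⟩ | ⟨rfl, rfl⟩⟩, hab⟩
    · exact ⟨hab, .inl ⟨hx, rfl⟩⟩
    · exact ⟨hab, .inr ⟨hx, rfl⟩⟩
  · rintro ⟨hab, ⟨ha, rfl⟩ | ⟨hb, rfl⟩⟩
    · exact ⟨⟨a, ha, .inl ⟨rfl, rfl⟩⟩, hab⟩
    · exact ⟨⟨b, hb, .inr ⟨rfl, rfl⟩⟩, hab⟩

theorem isTree_parentGraph [Finite V] (rank : V → ℕ) (hrank : ∀ x ≠ root, rank (p x) < rank x) :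
    (parentGraph root p).IsTree := by
  have hne : ∀ x ≠ root, x ≠ p x := fun x hx h => (hrank x hx).ne (congrArg rank h).symm
  have hreach : ∀ x, (parentGraph root p).Reachable x root := by
    intro x
    induction hn : rank x using Nat.strong_induction_on generalizing x with
    | _ n ih =>
      by_cases hx : x = root
      · exact hx ▸ .rfl
      · exact (parentGraph_adj.2 ⟨hne x hx, .inl ⟨hx, rfl⟩⟩).reachable.trans
          (ih _ (hn ▸ hrank x hx) _ rfl)
  have hinj : InjOn (fun x => s(x, p x)) {root}ᶜ := by
    intro x hx y hy hxy
    rcases Sym2.eq_iff.1 hxy with ⟨h, -⟩ | ⟨hxp, hyp⟩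
    · exact h
    · have h₁ := hrank x hx
      have h₂ := hrank y hy
      rw [hyp] at h₁
      rw [← hxp] at h₂
      omega
  have hedges : (parentGraph root p).edgeSet = (fun x => s(x, p x)) '' {root}ᶜ := by
    rw [parentGraph, SimpleGraph.edgeSet_fromEdgeSet, sdiff_eq_left, disjoint_left]
    rintro _ ⟨x, hx, rfl⟩
    exact Sym2.mk_isDiag_iff.not.2 (hne x hx)
  rw [SimpleGraph.isTree_iff_connected_and_card, SimpleGraph.connected_iff]
  refine ⟨⟨fun x y => (hreach x).trans (hreach y).symm, ⟨root⟩⟩, ?_⟩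
  rw [hedges, Nat.card_coe_set_eq, hinj.ncard_image, compl_eq_univ_sdiff,
    ncard_sdiff_singleton_add_one (mem_univ root), ncard_univ]

theorem isPlaneSpanningTree_parentGraph {P : Finset ℝ²} {root : ↥P} {p : ↥P → ↥P}
    (rank : ↥P → ℕ) (hrank : ∀ x ≠ root, rank (p x) < rank x)
    (hplane : ∀ x y, x ≠ root → y ≠ root → x ≠ y → x ≠ p y → p x ≠ y → p x ≠ p y →
      openSegment ℝ (x : ℝ²) (p x) ∩ openSegment ℝ (y : ℝ²) (p y) = ∅) :
    IsPlaneSpanningTree (parentGraph root p) := by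
  refine ⟨isTree_parentGraph rank hrank, fun a b x y hab hxy hax hay hbx hby => ?_⟩
  rw [parentGraph_adj] at hab hxy
  rcases hab with ⟨-, ⟨ha, rfl⟩ | ⟨hb, rfl⟩⟩ <;> rcases hxy with ⟨-, ⟨hx, rfl⟩ | ⟨hy, rfl⟩⟩
  · exact hplane a x ha hx hax hay hbx hby
  · rw [openSegment_symm ℝ (p y : ℝ²)]
    exact hplane a y ha hy hay hax hby hbx
  · rw [openSegment_symm ℝ (p b : ℝ²)]
    exact hplane b x hb hx hbx hby hax hay
  · rw [openSegment_symm ℝ (p b : ℝ²), openSegment_symm ℝ (p y : ℝ²)]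
    exact hplane b y hb hy hby hbx hay hax

end ParentGraph

theorem openSegment_inter_eq_empty_of_affineMap {E : Type*} [AddCommGroup E] [Module ℝ E]
    (f : E →ᵃ[ℝ] ℝ) {a b x y : E} (ha : f a ≤ 0) (hb : f b ≤ 0) (hx : 0 < f x) (hy : 0 < f y) :
    openSegment ℝ a b ∩ openSegment ℝ x y = ∅ := by
  have hab : openSegment ℝ a b ⊆ f ⁻¹' Iic 0 := (openSegment_subset_segment ℝ a b).trans
    (((convex_Iic 0).affine_preimage f).segment_subset ha hb)
  have hxy : openSegment ℝ x y ⊆ f ⁻¹' Ioi 0 := (openSegment_subset_segment ℝ x y).trans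
    (((convex_Ioi 0).affine_preimage f).segment_subset hx hy)
  exact disjoint_iff_inter_eq_empty.1 (((Iic_disjoint_Ioi le_rfl).preimage f).mono hab hxy)

theorem exists_injOn_coord_add_mul (S : Finset ℝ²) :
    ∃ t : ℝ, InjOn (fun x : ℝ² => x 0 + t * x 1) S := by
  obtain ⟨t, ht⟩ := Infinite.exists_notMem_finset
    ((S ×ˢ S).image fun pq => (pq.1 0 - pq.2 0) / (pq.2 1 - pq.1 1))
  refine ⟨t, fun p hp q hq hpq => ?_⟩
  simp only at hpq
  by_cases h1 : p 1 = q 1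
  · ext i
    fin_cases i
    · simp only [h1] at hpq; simpa using hpq
    · exact h1
  · refine absurd (Finset.mem_image.2 ⟨(p, q), Finset.mem_product.2 ⟨hp, hq⟩, ?_⟩) ht
    rw [div_eq_iff (sub_ne_zero.2 (Ne.symm h1))]
    linear_combination hpq

/-- `det (x - v, z - v)`, whose sign tells on which side of the line `vz` the point `x` lies. -/
noncomputable def side (v z : ℝ²) : ℝ² →ᵃ[ℝ] ℝ where
  toFun x := (x 0 - v 0) * (z 1 - v 1) - (x 1 - v 1) * (z 0 - v 0)
  linear := (z 1 - v 1) • (EuclideanSpace.proj 0 : ℝ² →L[ℝ] ℝ).toLinearMap -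
    (z 0 - v 0) • (EuclideanSpace.proj 1 : ℝ² →L[ℝ] ℝ).toLinearMap
  map_vadd' x w := by simp; ring

theorem side_apply (v z x : ℝ²) :
    side v z x = (x 0 - v 0) * (z 1 - v 1) - (x 1 - v 1) * (z 0 - v 0) := rfl

@[simp] theorem side_self_left (v z : ℝ²) : side v z v = 0 := by simp [side_apply]

@[simp] theorem side_self_right (v z : ℝ²) : side v z z = 0 := by rw [side_apply]; ring

section Slope

variable (t : ℝ) (v : ℝ²)

/-- Points of positive `depth` lie in an open half-plane bounded by a line through `v`;
on it, `slope` orders them by the direction in which they are seen from `v`. -/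
def depth (x : ℝ²) : ℝ := (x 0 - v 0) + t * (x 1 - v 1)

noncomputable def slope (x : ℝ²) : ℝ := (x 1 - v 1) / depth t v x

variable {t v}

theorem side_eq_depth_mul_depth_mul {x z : ℝ²} (hx : depth t v x ≠ 0) (hz : depth t v z ≠ 0) :
    side v z x = depth t v x * depth t v z * (slope t v z - slope t v x) := by
  rw [slope, slope, side_apply]
  field_simp
  simp only [depth]
  ring

theorem side_pos_of_slope_lt {x z : ℝ²} (hx : 0 < depth t v x) (hz : 0 < depth t v z)
    (h : slope t v x < slope t v z) : 0 < side v z x := by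
  rw [side_eq_depth_mul_depth_mul hx.ne' hz.ne']
  exact mul_pos (mul_pos hx hz) (sub_pos.2 h)

theorem side_neg_of_slope_lt {x z : ℝ²} (hx : 0 < depth t v x) (hz : 0 < depth t v z)
    (h : slope t v z < slope t v x) : side v z x < 0 := by
  rw [side_eq_depth_mul_depth_mul hx.ne' hz.ne']
  exact mul_neg_of_pos_of_neg (mul_pos hx hz) (sub_neg.2 h)

theorem side_nonpos_of_slope_le {x z : ℝ²} (hx : 0 < depth t v x) (hz : 0 < depth t v z)
    (h : slope t v z ≤ slope t v x) : side v z x ≤ 0 := by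
  rw [side_eq_depth_mul_depth_mul hx.ne' hz.ne']
  exact mul_nonpos_of_nonneg_of_nonpos (mul_pos hx hz).le (sub_nonpos.2 h)

theorem collinear_of_slope_eq {x z : ℝ²} (hx : depth t v x ≠ 0) (hz : depth t v z ≠ 0)
    (h : slope t v x = slope t v z) : Collinear ℝ {v, x, z} := by
  rw [slope, slope, div_eq_div_iff hx hz] at h
  have hline : x = AffineMap.lineMap v z (depth t v x / depth t v z) := by
    ext i
    rw [AffineMap.lineMap_apply_module', PiLp.add_apply, PiLp.smul_apply, PiLp.sub_apply,
      smul_eq_mul, div_mul_eq_mul_div, div_add' _ _ _ hz, eq_div_iff hz]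
    fin_cases i
    · simp only [depth, Fin.zero_eta] at h ⊢
      linear_combination (-t) * h
    · simp only [depth, Fin.mk_one] at h ⊢
      linear_combination h
  rw [insert_comm]
  exact collinear_insert_of_mem_affineSpan_pair
    (hline ▸ AffineMap.lineMap_mem_affineSpan_pair _ _ _)

theorem openSegment_inter_eq_empty_of_max_slope_lt_min_slope {p q a b : ℝ²}
    (hp : 0 < depth t v p) (hq : 0 < depth t v q) (ha : 0 < depth t v a) (hb : 0 < depth t v b)
    (h : max (slope t v p) (slope t v q) < min (slope t v a) (slope t v b)) :
    openSegment ℝ p q ∩ openSegment ℝ a b = ∅ := by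
  wlog hab : slope t v a ≤ slope t v b generalizing a b
  · rw [openSegment_symm ℝ a b]
    exact this hb ha (min_comm (slope t v a) _ ▸ h) (le_of_not_ge hab)
  rw [min_eq_left hab, max_lt_iff] at h
  rw [inter_comm]
  exact openSegment_inter_eq_empty_of_affineMap (side v a) (side_self_right v a).le
    (side_nonpos_of_slope_le hb ha hab) (side_pos_of_slope_lt hp ha h.1)
    (side_pos_of_slope_lt hq ha h.2)

theorem openSegment_inter_openSegment_base_eq_empty {p q z : ℝ²}
    (hp : 0 < depth t v p) (hq : 0 < depth t v q) (hz : 0 < depth t v z)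
    (h : slope t v z < min (slope t v p) (slope t v q) ∨
      max (slope t v p) (slope t v q) < slope t v z) :
    openSegment ℝ p q ∩ openSegment ℝ v z = ∅ := by
  rw [inter_comm]
  rcases h with h | h
  · rw [lt_min_iff] at h
    refine openSegment_inter_eq_empty_of_affineMap (-side v z) ?_ ?_ ?_ ?_ <;>
      simp only [AffineMap.coe_neg, Pi.neg_apply, side_self_left, side_self_right, neg_zero,
        le_refl, neg_pos]
    exacts [side_neg_of_slope_lt hp hz h.1, side_neg_of_slope_lt hq hz h.2]
  · rw [max_lt_iff] at h
    exact openSegment_inter_eq_empty_of_affineMap (side v z) (side_self_left v z).le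
      (side_self_right v z).le (side_pos_of_slope_lt hp hz h.1) (side_pos_of_slope_lt hq hz h.2)

end Slope

theorem exists_crossing_isPlaneSpanningTree_of_depth_pos {P : Finset ℝ²} {t : ℝ} {v : ↥P}
    (hdepth : ∀ q : ↥P, q ≠ v → 0 < depth t v q)
    (hslope : ∀ q z : ↥P, q ≠ v → z ≠ v → slope t v q = slope t v z → q = z)
    {Y : Set ↥P} (hvY : v ∉ Y) (hY : Y.Nonempty) :
    ∃ T : SimpleGraph ↥P, IsPlaneSpanningTree T ∧ ∀ a b, T.Adj a b → (a ∈ Y ↔ b ∉ Y) := by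
  classical
  set o : ↥P → ℝ := fun q => slope t v q
  choose β hβY hβgap hβbelow using
    fun r : ↥P => exists_nearest_below_or_min o (toFinite Y) hY (o r)
  have hYv : ∀ b ∈ Y, b ≠ v := fun b hb h => hvY (h ▸ hb)
  have hβv : ∀ r, β r ≠ v := fun r => hYv _ (hβY r)
  have hgap : ∀ r ∉ Y, r ≠ v → ∀ b ∈ Y, b ≠ β r →
      o b < min (o r) (o (β r)) ∨ max (o r) (o (β r)) < o b := fun r hr hrv b hb hbβ =>
    lt_min_or_max_lt_of_notMem_Ioo (hβgap r b hb)
      (mt (hslope b r (hYv b hb) hrv) fun h => hr (h ▸ hb))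
      (mt (hslope b (β r) (hYv b hb) (hβv r)) hbβ)
  have hspoke : ∀ b ∈ Y, ∀ r ∉ Y, r ≠ v → b ≠ β r →
      openSegment ℝ (r : ℝ²) (β r) ∩ openSegment ℝ (v : ℝ²) b = ∅ := fun b hb r hr hrv hbβ =>
    openSegment_inter_openSegment_base_eq_empty (hdepth r hrv) (hdepth _ (hβv r))
      (hdepth b (hYv b hb)) (hgap r hr hrv b hb hbβ)
  have hedge : ∀ r ∉ Y, ∀ r' ∉ Y, r ≠ v → r' ≠ v → β r ≠ β r' →
      openSegment ℝ (r : ℝ²) (β r) ∩ openSegment ℝ (r' : ℝ²) (β r') = ∅ := by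
    intro r hr r' hr' hrv hr'v hββ
    rcases max_lt_min_or_max_lt_min (hgap r hr hrv _ (hβY r') (Ne.symm hββ))
        (hgap r' hr' hr'v _ (hβY r) hββ) (fun h => hβbelow r' ⟨β r, hβY r, h⟩)
        (fun h => hβbelow r ⟨β r', hβY r', h⟩) with h | h
    · exact openSegment_inter_eq_empty_of_max_slope_lt_min_slope (hdepth r hrv)
        (hdepth _ (hβv r)) (hdepth r' hr'v) (hdepth _ (hβv r')) h
    · rw [inter_comm]
      exact openSegment_inter_eq_empty_of_max_slope_lt_min_slope (hdepth r' hr'v)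
        (hdepth _ (hβv r')) (hdepth r hrv) (hdepth _ (hβv r)) h
  let p : ↥P → ↥P := fun x => if x ∈ Y then v else β x
  refine ⟨parentGraph v p, isPlaneSpanningTree_parentGraph
    (fun x => if x = v then 0 else if x ∈ Y then 1 else 2) ?_ ?_, ?_⟩
  · intro x hx
    by_cases hxY : x ∈ Y <;> simp [p, hx, hxY, hβY, hβv]
  · intro x y hx hy hxy hxpy hpxy hpxpy
    by_cases hxY : x ∈ Y <;> by_cases hyY : y ∈ Y <;>
      simp only [p, hxY, hyY, if_true, if_false] at hxpy hpxy hpxpy ⊢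
    · exact absurd rfl hpxpy
    · rw [inter_comm, openSegment_symm ℝ (x : ℝ²)]
      exact hspoke x hxY y hyY hy hxpy
    · rw [openSegment_symm ℝ (y : ℝ²)]
      exact hspoke y hyY x hxY hx (Ne.symm hpxy)
    · exact hedge x hxY y hyY hx hy hpxpy
  · intro a b hab
    rcases parentGraph_adj.1 hab with ⟨-, ⟨-, rfl⟩ | ⟨-, rfl⟩⟩
    · by_cases ha : a ∈ Y <;> simp [p, ha, hvY, hβY]
    · by_cases hb : b ∈ Y <;> simp [p, hb, hvY, hβY]

theorem exists_crossing_isPlaneSpanningTree (P : Finset ℝ²)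
    (hgen : ∀ p ∈ P, ∀ q ∈ P, ∀ r ∈ P, p ≠ q → q ≠ r → p ≠ r → ¬ Collinear ℝ {p, q, r})
    {X : Set ↥P} (hX : X.Nonempty) (hXc : Xᶜ.Nonempty) :
    ∃ T : SimpleGraph ↥P, IsPlaneSpanningTree T ∧ ∀ a b, T.Adj a b → (a ∈ X ↔ b ∉ X) := by
  obtain ⟨t, ht⟩ := exists_injOn_coord_add_mul P
  obtain ⟨v, -, hv⟩ := Finset.univ.exists_min_image (fun q : ↥P => (q : ℝ²) 0 + t * (q : ℝ²) 1)
    ⟨hX.some, Finset.mem_univ _⟩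
  have hdepth : ∀ q : ↥P, q ≠ v → 0 < depth t v q := by
    intro q hqv
    have hne := mt (ht q.2 v.2) (Subtype.coe_injective.ne hqv)
    have hle := hv q (Finset.mem_univ q)
    simp only [depth]
    contrapose! hne
    linarith
  have hslope : ∀ q z : ↥P, q ≠ v → z ≠ v → slope t v q = slope t v z → q = z := by
    intro q z hqv hzv h
    by_contra hqz
    exact hgen v v.2 q q.2 z z.2 (Subtype.coe_injective.ne hqv.symm)
      (Subtype.coe_injective.ne hqz) (Subtype.coe_injective.ne hzv.symm)
      (collinear_of_slope_eq (hdepth q hqv).ne' (hdepth z hzv).ne' h)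
  wlog hvX : v ∉ X generalizing X
  · obtain ⟨T, hT, hcross⟩ := this hXc (by rwa [compl_compl]) (by simpa using hvX)
    exact ⟨T, hT, fun a b hab => (by simpa using hcross a b hab : a ∉ X ↔ b ∈ X).not_right⟩
  exact exists_crossing_isPlaneSpanningTree_of_depth_pos hdepth hslope hvX hX

theorem exists_separating_set_of_card_edgeSet_add_two_le {V : Type*} [Finite V]
    (H : SimpleGraph V) (h : Nat.card H.edgeSet + 2 ≤ Nat.card V) :
    ∃ X : Set V, X.Nonempty ∧ Xᶜ.Nonempty ∧ ∀ a b, H.Adj a b → (a ∈ X ↔ b ∈ X) := by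
  have : Nonempty V := (Nat.card_pos_iff.1 (by omega)).1
  have hdisconn : ¬ H.Preconnected := fun hpre =>
    absurd (SimpleGraph.Connected.card_vert_le_card_edgeSet_add_one ⟨hpre⟩) (by omega)
  obtain ⟨u, w, huw⟩ : ∃ u w, ¬ H.Reachable u w := by
    simpa [SimpleGraph.Preconnected] using hdisconn
  exact ⟨{x | H.Reachable u x}, ⟨u, .rfl⟩, ⟨w, huw⟩,
    fun a b hab => ⟨fun ha => ha.trans hab.reachable, fun hb => hb.trans hab.symm.reachable⟩⟩

theorem exists_cut_injOn_crossing_edgeSet {V κ : Type*} [Finite V] (G : SimpleGraph V)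
    {c : Sym2 V → κ} (hc : SurjOn c G.edgeSet univ)
    (hcard : Nat.card G.edgeSet + 2 ≤ Nat.card κ + Nat.card V) :
    ∃ X : Set V, X.Nonempty ∧ Xᶜ.Nonempty ∧ ∀ H ≤ G,
      (∀ a b, H.Adj a b → (a ∈ X ↔ b ∉ X)) → InjOn c H.edgeSet := by
  obtain ⟨R, hRG, hR⟩ := hc.exists_bijOn_subset
  have hRcard : R.ncard = Nat.card κ := by rw [hR.ncard_eq, ncard_univ]
  have hRle : R.ncard ≤ G.edgeSet.ncard := ncard_le_ncard hRG (toFinite _)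
  set D := G.edgeSet \ R
  have hD : Nat.card (SimpleGraph.fromEdgeSet D).edgeSet + 2 ≤ Nat.card V := by
    have hle : (SimpleGraph.fromEdgeSet D).edgeSet.ncard ≤ D.ncard := by
      rw [SimpleGraph.edgeSet_fromEdgeSet]
      exact ncard_le_ncard sdiff_subset (toFinite _)
    rw [ncard_sdiff hRG (toFinite _)] at hle
    rw [Nat.card_coe_set_eq] at hcard ⊢
    omega
  obtain ⟨X, hX, hXc, hXD⟩ := exists_separating_set_of_card_edgeSet_add_two_le _ hD
  refine ⟨X, hX, hXc, fun H hHG hcross => hR.injOn.mono ?_⟩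
  rintro ⟨a, b⟩ hab
  by_contra haR
  have hDab : (SimpleGraph.fromEdgeSet D).Adj a b :=
    (SimpleGraph.fromEdgeSet_adj _).2 ⟨⟨SimpleGraph.edgeSet_mono hHG hab, haR⟩, hab.ne⟩
  have h₁ := hXD a b hDab
  have h₂ := hcross a b hab
  tauto

end GeometricGraph

open GeometricGraph in
/-- if `G` is the complete geometric graph on `n ≥ 3` points in general position
and `c` is a colouring of the edges of `G` with exactly `C(n,2) - n + 2` colours, then `G`
contains a heterochromatic plane spanning tree. -/
theorem heterochromatic_plane_tree (P : Finset (EuclideanSpace ℝ (Fin 2)))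
    (hcard : 3 ≤ P.card)
    (hgen : ∀ p ∈ P, ∀ q ∈ P, ∀ r ∈ P, p ≠ q → q ≠ r → p ≠ r →
      ¬ Collinear ℝ ({p, q, r} : Set (EuclideanSpace ℝ (Fin 2))))
    (c : Sym2 ↥P → Fin (P.card.choose 2 - P.card + 2))
    (hc : Set.SurjOn c (⊤ : SimpleGraph ↥P).edgeSet Set.univ) :
    ∃ T : SimpleGraph ↥P, IsPlaneSpanningTree T ∧ Set.InjOn c T.edgeSet := by
  classical
  have hchoose : P.card ≤ P.card.choose 2 := by
    rw [Nat.choose_two_right, Nat.le_div_iff_mul_le two_pos]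
    exact Nat.mul_le_mul_left _ (by omega)
  have hedges : Nat.card (⊤ : SimpleGraph ↥P).edgeSet = P.card.choose 2 := by
    rw [Nat.card_eq_fintype_card, ← SimpleGraph.edgeFinset_card,
      SimpleGraph.card_edgeFinset_top_eq_card_choose_two, Fintype.card_coe]
  obtain ⟨X, hX, hXc, hrainbow⟩ := exists_cut_injOn_crossing_edgeSet ⊤ hc (by
    rw [hedges, Nat.card_eq_fintype_card, Fintype.card_fin, Nat.card_eq_fintype_card,
      Fintype.card_coe]
    omega)
  obtain ⟨T, hT, hcross⟩ := exists_crossing_isPlaneSpanningTree P hgen hX hXc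
  exact ⟨T, hT, hrainbow T le_top hcross⟩
end

section
/- Let G be a simple connected graph with m ≥ 2 edges and at least 3 vertices, and let γ(G) be the smallest number of edges whose removal breaks G into exactly three connected components. If c is a coloring of the edges of G with exactly m - γ(G) + 2 colors, then G has a spanning tree whose edges receive pairwise distinct colors. -/
/-!
If deleting the edges of any `r` colour classes leaves at most `r + 1` components
(`RainbowCondition`), the colouring has a heterochromatic spanning tree. Indeed, the number
`κ(F)` of components of `G - F` is supermodular in `F`. If two edges `e ≠ f` of the same colour
could each not be deleted, witnesses `Rₑ`, `R_f` would give (identifying colour sets with their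
preimages)
  `|Rₑ| + |R_f| + 4 ≤ κ(Rₑ ∪ {e}) + κ(R_f ∪ {f})`
  `            ≤ κ(Rₑ ∩ R_f) + κ(Rₑ ∪ R_f ∪ {c e}) ≤ |Rₑ| + |R_f| + 3`;
hence a minimal subgraph satisfying the condition is rainbow.

With `m - γ + 2` colours the condition holds: if deleting `r ≥ 1` colour classes left at least
`r + 2` components, restoring their edges one at a time, each merging two components, reaches
three components after at least `r - 1` steps, and the edges still deleted then form a cut counted
by `γ`. So the classes contain at least `γ + r - 1` edges, while surjectivity puts at least
`m - γ + 2 - r` edges outside them.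
-/

open Set

lemma Set.SurjOn.card_sub_card_le_ncard_sdiff_preimage {β α : Type*} [Fintype α] {f : β → α}
    {s : Set β} (hf : SurjOn f s univ) (hs : s.Finite) (R : Finset α) :
    Fintype.card α - R.card ≤ (s \ f ⁻¹' R).ncard := by
  classical
  calc Fintype.card α - R.card = ((Rᶜ : Finset α) : Set α).ncard := by
        rw [ncard_coe_finset, Finset.card_compl]
    _ ≤ (f '' (s \ f ⁻¹' R)).ncard := by
        refine ncard_le_ncard (fun x hx => ?_) ((hs.sdiff).image f)
        obtain ⟨y, hy, rfl⟩ := hf (mem_univ x)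
        exact ⟨y, ⟨hy, by simpa using hx⟩, rfl⟩
    _ ≤ (s \ f ⁻¹' R).ncard := ncard_image_le hs.sdiff

namespace SimpleGraph

variable {V : Type*} {G H : SimpleGraph V}

lemma Reachable.deleteEdges_singleton_or {u v a b : V} (h : H.Reachable a b) :
    (H.deleteEdges {s(u, v)}).Reachable a b ∨
      (H.deleteEdges {s(u, v)}).Reachable a u ∧ (H.deleteEdges {s(u, v)}).Reachable v b ∨
      (H.deleteEdges {s(u, v)}).Reachable a v ∧ (H.deleteEdges {s(u, v)}).Reachable u b := by
  rw [reachable_iff_reflTransGen] at h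
  induction h with
  | refl => exact .inl .rfl
  | @tail b c _ hbc ih =>
    by_cases he : s(b, c) = s(u, v)
    · rcases Sym2.eq_iff.1 he with ⟨rfl, rfl⟩ | ⟨rfl, rfl⟩ <;>
        rcases ih with hab | ⟨hau, hvb⟩ | ⟨hav, hub⟩
      exacts [.inr (.inl ⟨hab, .rfl⟩), .inl (hau.trans hvb.symm), .inl hav,
        .inr (.inr ⟨hab, .rfl⟩), .inl hau, .inl (hav.trans hub.symm)]
    · have hbc : (H.deleteEdges {s(u, v)}).Reachable b c := Adj.reachable (by simp [hbc, he])
      rcases ih with hab | ⟨hau, hvb⟩ | ⟨hav, hub⟩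
      exacts [.inl (hab.trans hbc), .inr (.inl ⟨hau, hvb.trans hbc⟩),
        .inr (.inr ⟨hav, hub.trans hbc⟩)]

lemma Connected.card_connectedComponent (h : G.Connected) : Nat.card G.ConnectedComponent = 1 :=
  Nat.card_eq_one_iff_unique.2
    ⟨h.preconnected.subsingleton_connectedComponent,
      ⟨G.connectedComponentMk h.nonempty.some⟩⟩

variable [Finite V]

lemma card_connectedComponent_deleteEdges_singleton_of_not_isBridge {e : Sym2 V}
    (he : ¬ H.IsBridge e) :
    Nat.card (H.deleteEdges {e}).ConnectedComponent = Nat.card H.ConnectedComponent := by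
  induction e with | h u v => ?_
  rw [isBridge_iff, not_not] at he
  refine le_antisymm (Nat.card_le_card_of_injective
      (ConnectedComponent.map (Hom.ofLE (deleteEdges_le _))) fun x y hxy => ?_)
    (ConnectedComponent.card_le_card_of_le (deleteEdges_le _))
  induction x, y using ConnectedComponent.ind₂ with | _ a b => ?_
  simp only [ConnectedComponent.map_mk, Hom.ofLE_apply, ConnectedComponent.eq] at hxy ⊢
  rcases hxy.deleteEdges_singleton_or with hab | ⟨hau, hvb⟩ | ⟨hav, hub⟩
  exacts [hab, hau.trans (he.trans hvb), hav.trans (he.symm.trans hub)]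

lemma IsBridge.card_connectedComponent_deleteEdges_singleton {e : Sym2 V} (hb : H.IsBridge e)
    (he : e ∈ H.edgeSet) :
    Nat.card (H.deleteEdges {e}).ConnectedComponent = Nat.card H.ConnectedComponent + 1 := by
  induction e with | h u v => ?_
  set D := H.deleteEdges {s(u, v)}
  set ψ : D.ConnectedComponent → H.ConnectedComponent :=
    ConnectedComponent.map (Hom.ofLE (deleteEdges_le _))
  have hinj : InjOn ψ {D.connectedComponentMk u}ᶜ := fun x hx y hy hxy => by
    induction x, y using ConnectedComponent.ind₂ with | _ a b => ?_
    simp only [ψ, mem_compl_iff, mem_singleton_iff, ConnectedComponent.map_mk, Hom.ofLE_apply,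
      ConnectedComponent.eq] at hx hy hxy ⊢
    rcases hxy.deleteEdges_singleton_or with hab | ⟨hau, -⟩ | ⟨-, hub⟩
    exacts [hab, absurd hau hx, absurd hub.symm hy]
  have himage : ψ '' {D.connectedComponentMk u}ᶜ = univ := by
    refine eq_univ_of_forall fun C => ?_
    obtain ⟨x, rfl⟩ := ConnectedComponent.surjective_map_ofLE (deleteEdges_le {s(u, v)}) C
    by_cases hx : x = D.connectedComponentMk u
    · refine ⟨D.connectedComponentMk v, fun h => hb (ConnectedComponent.eq.1 h).symm, ?_⟩
      rw [hx]
      exact ConnectedComponent.sound (H.mem_edgeSet.1 he).reachable.symm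
    · exact ⟨x, hx, rfl⟩
  rw [← ncard_univ, ← ncard_univ, ← himage, hinj.ncard_image, compl_eq_univ_sdiff,
    ncard_sdiff_singleton_add_one (mem_univ _)]

/-- A bridge of `H` that is still an edge of `H' ≤ H` is a bridge of `H'`, so deleting `e` adds at
least as many components to `H'` as to `H`. -/
lemma card_connectedComponent_deleteEdges_singleton_add_le_of_le {H' : SimpleGraph V} {e : Sym2 V}
    (hle : H' ≤ H) (he : e ∈ H.edgeSet → e ∈ H'.edgeSet) :
    Nat.card (H.deleteEdges {e}).ConnectedComponent + Nat.card H'.ConnectedComponent ≤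
      Nat.card (H'.deleteEdges {e}).ConnectedComponent + Nat.card H.ConnectedComponent := by
  by_cases hb : e ∈ H.edgeSet ∧ H.IsBridge e
  · rw [hb.2.card_connectedComponent_deleteEdges_singleton hb.1,
      (hb.2.anti hle).card_connectedComponent_deleteEdges_singleton (he hb.1)]
    omega
  · have hH : Nat.card (H.deleteEdges {e}).ConnectedComponent = Nat.card H.ConnectedComponent := by
      by_cases heH : e ∈ H.edgeSet
      · exact card_connectedComponent_deleteEdges_singleton_of_not_isBridge (hb <| ⟨heH, ·⟩)
      · rw [(deleteEdges_eq_self).2 (disjoint_singleton_right.2 heH)]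
    have := ConnectedComponent.card_le_card_of_le (deleteEdges_le (G := H') {e})
    omega

lemma card_connectedComponent_deleteEdges_union_add_le {A B : Set (Sym2 V)} (hAB : A ⊆ B)
    (S : Finset (Sym2 V)) (hS : Disjoint (S : Set (Sym2 V)) B) :
    Nat.card (G.deleteEdges (A ∪ S)).ConnectedComponent +
        Nat.card (G.deleteEdges B).ConnectedComponent ≤
      Nat.card (G.deleteEdges (B ∪ S)).ConnectedComponent +
        Nat.card (G.deleteEdges A).ConnectedComponent := by
  classical
  induction S using Finset.induction_on with
  | empty => rw [Finset.coe_empty, union_empty, union_empty, add_comm]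
  | @insert g S hgS ih =>
    simp only [Finset.coe_insert, disjoint_insert_left] at hS
    have hstep := card_connectedComponent_deleteEdges_singleton_add_le_of_le (e := g)
      (H := G.deleteEdges (A ∪ S)) (H' := G.deleteEdges (B ∪ S))
      (deleteEdges_anti (union_subset_union_left _ hAB)) fun hg => by
        simp only [edgeSet_deleteEdges, mem_sdiff, mem_union, Finset.mem_coe] at hg ⊢
        exact ⟨hg.1, by tauto⟩
    simp only [deleteEdges_deleteEdges] at hstep
    rw [Finset.coe_insert, union_insert, union_insert, ← union_singleton, ← union_singleton]
    have := ih hS.2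
    omega

theorem card_connectedComponent_deleteEdges_add_le (X Y : Set (Sym2 V)) :
    Nat.card (G.deleteEdges X).ConnectedComponent +
        Nat.card (G.deleteEdges Y).ConnectedComponent ≤
      Nat.card (G.deleteEdges (X ∩ Y)).ConnectedComponent +
        Nat.card (G.deleteEdges (X ∪ Y)).ConnectedComponent := by
  have hS := (toFinite (X \ Y)).coe_toFinset
  have := card_connectedComponent_deleteEdges_union_add_le (G := G) (A := X ∩ Y)
    inter_subset_right (toFinite (X \ Y)).toFinset (by rw [hS]; exact disjoint_sdiff_left)
  rw [hS, inter_union_sdiff, union_sdiff_self, union_comm Y] at this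
  omega

lemma exists_adj_not_reachable_of_card_lt (hle : H ≤ G)
    (h : Nat.card G.ConnectedComponent < Nat.card H.ConnectedComponent) :
    ∃ u v, G.Adj u v ∧ ¬ H.Reachable u v := by
  by_contra! hadj
  refine h.not_ge (Nat.card_le_card_of_injective (ConnectedComponent.map (Hom.ofLE hle))
    fun x y hxy => ?_)
  induction x, y using ConnectedComponent.ind₂ with | _ a b => ?_
  simp only [ConnectedComponent.map_mk, Hom.ofLE_apply, ConnectedComponent.eq] at hxy ⊢
  rw [reachable_iff_reflTransGen] at hxy
  induction hxy with
  | refl => rfl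
  | tail _ hbc ih => exact ih.trans (hadj _ _ hbc)

lemma exists_mem_card_connectedComponent_deleteEdges_sdiff_singleton_add_one {F : Set (Sym2 V)}
    (h : Nat.card G.ConnectedComponent < Nat.card (G.deleteEdges F).ConnectedComponent) :
    ∃ e ∈ F, Nat.card (G.deleteEdges (F \ {e})).ConnectedComponent + 1 =
      Nat.card (G.deleteEdges F).ConnectedComponent := by
  obtain ⟨u, v, huv, hnr⟩ := exists_adj_not_reachable_of_card_lt (deleteEdges_le F) h
  have he : s(u, v) ∈ F := by
    by_contra he
    exact hnr (Adj.reachable (by simp [huv, he]))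
  have hD : (G.deleteEdges (F \ {s(u, v)})).deleteEdges {s(u, v)} = G.deleteEdges F := by
    rw [deleteEdges_deleteEdges, sdiff_union_self, union_eq_left.2 (singleton_subset_iff.2 he)]
  refine ⟨s(u, v), he, ?_⟩
  rw [← hD, IsBridge.card_connectedComponent_deleteEdges_singleton (isBridge_iff.2 (hD ▸ hnr))]
  simp [huv]

lemma exists_subset_card_connectedComponent_deleteEdges_eq {F : Set (Sym2 V)} {j : ℕ}
    (hGj : Nat.card G.ConnectedComponent ≤ j)
    (hjF : j ≤ Nat.card (G.deleteEdges F).ConnectedComponent) :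
    ∃ F' ⊆ F, Nat.card (G.deleteEdges F').ConnectedComponent = j ∧
      F'.ncard + Nat.card (G.deleteEdges F).ConnectedComponent ≤ F.ncard + j := by
  obtain ⟨n, hn⟩ := Nat.exists_eq_add_of_le hjF
  induction n generalizing F with
  | zero => exact ⟨F, subset_rfl, hn, by omega⟩
  | succ n ih =>
    obtain ⟨e, heF, he⟩ :=
      exists_mem_card_connectedComponent_deleteEdges_sdiff_singleton_add_one (G := G) (F := F)
        (by omega)
    obtain ⟨F', hF'F, hF'j, hcard⟩ := ih (F := F \ {e}) (by omega) (by omega)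
    refine ⟨F', hF'F.trans sdiff_subset, hF'j, ?_⟩
    have := ncard_sdiff_singleton_add_one heF (toFinite F)
    omega

def RainbowCondition {α : Type*} (G : SimpleGraph V) (c : Sym2 V → α) : Prop :=
  ∀ R : Finset α, Nat.card (G.deleteEdges (c ⁻¹' R)).ConnectedComponent ≤ R.card + 1

namespace RainbowCondition

variable {α : Type*} {c : Sym2 V → α}

lemma connected [Nonempty V] (h : G.RainbowCondition c) : G.Connected := by
  have h0 := h ∅
  rw [Finset.coe_empty, preimage_empty, deleteEdges_empty, Finset.card_empty] at h0
  have := Finite.card_le_one_iff_subsingleton.1 h0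
  exact ⟨fun a b => ConnectedComponent.eq.1 (Subsingleton.elim _ _)⟩

lemma deleteEdges_or [DecidableEq α] (h : G.RainbowCondition c) {e f : Sym2 V} (hef : e ≠ f)
    (hc : c e = c f) :
    (G.deleteEdges {e}).RainbowCondition c ∨ (G.deleteEdges {f}).RainbowCondition c := by
  by_contra! ⟨he, hf⟩
  simp only [RainbowCondition, not_forall, not_le, deleteEdges_deleteEdges] at he hf
  obtain ⟨Re, hRe⟩ := he
  obtain ⟨Rf, hRf⟩ := hf
  have hce : c e ∉ Re := fun hmem => (h Re).not_gt <| by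
    rwa [union_eq_right.2 (singleton_subset_iff.2 (mem_preimage.2 hmem))] at hRe
  have hcf : c f ∉ Rf := fun hmem => (h Rf).not_gt <| by
    rwa [union_eq_right.2 (singleton_subset_iff.2 (mem_preimage.2 hmem))] at hRf
  have hinter : ({e} ∪ c ⁻¹' Re) ∩ ({f} ∪ c ⁻¹' Rf) ⊆ c ⁻¹' ↑(Re ∩ Rf) := by
    simp only [subset_def, mem_inter_iff, mem_union, mem_singleton_iff, mem_preimage,
      Finset.coe_inter, Finset.mem_coe]
    grind
  have hunion : ({e} ∪ c ⁻¹' Re) ∪ ({f} ∪ c ⁻¹' Rf) ⊆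
      c ⁻¹' ↑(insert (c e) (Re ∪ Rf)) := by
    simp only [subset_def, mem_union, mem_singleton_iff, mem_preimage, Finset.coe_insert,
      Finset.coe_union, mem_insert_iff, Finset.mem_coe]
    grind
  have hsup :=
    card_connectedComponent_deleteEdges_add_le (G := G) ({e} ∪ c ⁻¹' Re) ({f} ∪ c ⁻¹' Rf)
  have hκinter := (ConnectedComponent.card_le_card_of_le (deleteEdges_anti hinter)).trans (h _)
  have hκunion := (ConnectedComponent.card_le_card_of_le (deleteEdges_anti hunion)).trans (h _)
  have hcard_insert := Finset.card_insert_le (c e) (Re ∪ Rf)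
  have hcard_union_inter := Finset.card_union_add_card_inter Re Rf
  omega

theorem exists_isTree_le_injOn [Nonempty V] (h : G.RainbowCondition c) :
    ∃ T ≤ G, T.IsTree ∧ InjOn c T.edgeSet := by
  classical
  obtain ⟨H, hHG, hH⟩ := exists_minimal_le_of_wellFoundedLT (RainbowCondition · c) G h
  obtain ⟨T, hTH, hT⟩ := hH.prop.connected.exists_isTree_le
  refine ⟨T, hTH.trans hHG, hT, InjOn.mono (edgeSet_mono hTH) fun e he f hf hc => ?_⟩
  by_contra hef
  rcases hH.prop.deleteEdges_or hef hc with h' | h'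
  · simpa using edgeSet_mono (hH.le_of_le h' (deleteEdges_le _)) he
  · simpa using edgeSet_mono (hH.le_of_le h' (deleteEdges_le _)) hf

end RainbowCondition

end SimpleGraph

theorem heterochromatic_spanning_tree_graph_general {V : Type*} [Fintype V]
    (G : SimpleGraph V) (hconn : G.Connected)
    (γ : ℕ)
    (hγ : γ = sInf {k : ℕ | ∃ F ⊆ G.edgeSet, F.ncard = k ∧
      Nat.card (G.deleteEdges F).ConnectedComponent = 3})
    (c : Sym2 V → Fin (G.edgeSet.ncard - γ + 2))
    (hc : Set.SurjOn c G.edgeSet Set.univ) :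
    ∃ T : SimpleGraph V, T ≤ G ∧ T.IsTree ∧ Set.InjOn c T.edgeSet := by
  have := hconn.nonempty
  refine SimpleGraph.RainbowCondition.exists_isTree_le_injOn fun R => ?_
  by_contra! hR
  obtain rfl | hRne := R.eq_empty_or_nonempty
  · rw [Finset.coe_empty, preimage_empty, SimpleGraph.deleteEdges_empty,
      hconn.card_connectedComponent, Finset.card_empty] at hR
    omega
  have hκ : Nat.card (G.deleteEdges (G.edgeSet ∩ c ⁻¹' R)).ConnectedComponent =
      Nat.card (G.deleteEdges (c ⁻¹' R)).ConnectedComponent := by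
    rw [inter_comm, ← SimpleGraph.deleteEdges_eq_inter_edgeSet]
  obtain ⟨F, hF, hF3, hFcard⟩ := G.exists_subset_card_connectedComponent_deleteEdges_eq
    (F := G.edgeSet ∩ c ⁻¹' R) (j := 3)
    (by rw [hconn.card_connectedComponent]; omega)
    (by have := Finset.card_pos.2 hRne; omega)
  have hγF : γ ≤ F.ncard := hγ ▸ Nat.sInf_le ⟨F, hF.trans inter_subset_left, rfl, hF3⟩
  have hcolors := hc.card_sub_card_le_ncard_sdiff_preimage (toFinite _) R
  have hsplit := ncard_inter_add_ncard_sdiff_eq_ncard G.edgeSet (c ⁻¹' R)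
  rw [Fintype.card_fin] at hcolors
  omega

/-- Arocha–Neumann-Lara: if `G` is a simple connected graph with `m ≥ 2` edges
and at least 3 vertices, `γ(G)` is the smallest number of edges whose removal breaks `G` into
exactly three connected components, and `c` is a colouring of the edges of `G` with exactly
`m - γ(G) + 2` colours, then `G` has a heterochromatic spanning tree. -/
theorem heterochromatic_spanning_tree_graph {V : Type*} [Fintype V]
    (G : SimpleGraph V) (hconn : G.Connected)
    (hm : 2 ≤ G.edgeSet.ncard) (hv : 3 ≤ Fintype.card V)
    (γ : ℕ)
    (hγ : γ = sInf {k : ℕ | ∃ F ⊆ G.edgeSet, F.ncard = k ∧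
      Nat.card (G.deleteEdges F).ConnectedComponent = 3})
    (c : Sym2 V → Fin (G.edgeSet.ncard - γ + 2))
    (hc : Set.SurjOn c G.edgeSet Set.univ) :
    ∃ T : SimpleGraph V, T ≤ G ∧ T.IsTree ∧ Set.InjOn c T.edgeSet :=
  heterochromatic_spanning_tree_graph_general G hconn γ hγ c hc
end

section
/- Let H_n be the hypergraph whose vertices are the edges of the complete graph K_n (n ≥ 3) and whose hyperedges are the edge sets of spanning trees of K_n. Then τ(H_n) = 2n - 3, i.e., the minimum size of a set of edges of K_n meeting every spanning tree in at least two edges is 2n - 3. -/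
/-!
Call `cutEdges A` the set of edges of `K_n` between `A` and its complement. If `A` and `B` are
disjoint nonempty vertex sets that do not cover all vertices, then `cutEdges A ∪ cutEdges B`
meets every connected spanning subgraph in two edges: one edge leaves `A ∪ B`, and a second
edge leaves whichever of `A`, `B` the first one does not start in. Conversely, if `T` meets every
spanning tree twice, then `K_n - T` has no spanning tree even after adding one edge, so it has
three components; with `A`, `B` two of them, `T ⊇ cutEdges A ∪ cutEdges B`. Inclusion-exclusion
gives `|cutEdges A ∪ cutEdges B| = a(n - a) + b(n - b) - ab` for `a = |A|`, `b = |B|`, and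
on `a, b ≥ 1`, `a + b < n` this is `2n - 3 + (a + b - 2)(n - a - b - 1) + (a - 1)(b - 1)`,
minimised at `a = b = 1`.
-/

open SimpleGraph Finset

namespace DoubleTransversal

variable {V : Type*}

lemma exists_adj_of_mem_of_notMem {S : SimpleGraph V} (hS : S.Preconnected)
    {A : Set V} {u v : V} (hu : u ∈ A) (hv : v ∉ A) : ∃ p ∈ A, ∃ q ∉ A, S.Adj p q := by
  obtain ⟨d, -, hd⟩ := (hS u v).some.exists_boundary_dart A hu hv
  exact ⟨d.fst, hd.1, d.snd, hd.2, d.adj⟩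

lemma connected_sup_edge_of_reachable {G : SimpleGraph V} {x y : V} [Nonempty V]
    (h : ∀ v, G.Reachable x v ∨ G.Reachable y v) : (G ⊔ edge x y).Connected := by
  have hxy : (G ⊔ edge x y).Reachable x y := by
    rcases eq_or_ne x y with rfl | hne
    · rfl
    · exact Adj.reachable (Or.inr ((edge_adj _ _ x y).2 ⟨Or.inl ⟨rfl, rfl⟩, hne⟩))
  have hx : ∀ v, (G ⊔ edge x y).Reachable x v := fun v =>
    (h v).elim (·.mono le_sup_left) (hxy.trans <| ·.mono le_sup_left)
  exact ⟨fun u v => (hx u).symm.trans (hx v)⟩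

lemma not_connected_sup_edge {T : Set (Sym2 V)}
    (hT : ∀ S : SimpleGraph V, S.IsTree → 2 ≤ (S.edgeSet ∩ T).ncard) (x y : V) :
    ¬ ((⊤ : SimpleGraph V).deleteEdges T ⊔ edge x y).Connected := by
  intro hconn
  obtain ⟨S, hSle, hS⟩ := hconn.exists_isTree_le
  have hsub : S.edgeSet ∩ T ⊆ {s(x, y)} := by
    rintro e ⟨heS, heT⟩
    rcases (edgeSet_sup _ _ ▸ edgeSet_mono hSle heS : _ ∨ _) with he | he
    · exact ((edgeSet_deleteEdges T ▸ he).2 heT).elim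
    · exact edgeSet_edge_subset he
  have := Set.ncard_le_ncard hsub
  rw [Set.ncard_singleton] at this
  have := hT S hS
  omega

lemma exists_three_not_reachable_deleteEdges [Nonempty V] {T : Set (Sym2 V)}
    (hT : ∀ S : SimpleGraph V, S.IsTree → 2 ≤ (S.edgeSet ∩ T).ncard) :
    ∃ x y z, ¬ ((⊤ : SimpleGraph V).deleteEdges T).Reachable x y ∧
      ¬ ((⊤ : SimpleGraph V).deleteEdges T).Reachable x z ∧
      ¬ ((⊤ : SimpleGraph V).deleteEdges T).Reachable y z := by
  obtain ⟨x⟩ := ‹Nonempty V›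
  obtain ⟨y, hxy⟩ : ∃ y, ¬ ((⊤ : SimpleGraph V).deleteEdges T).Reachable x y := by
    by_contra! h
    exact not_connected_sup_edge hT x x (connected_sup_edge_of_reachable fun v => .inl (h v))
  obtain ⟨z, hxz, hyz⟩ : ∃ z, ¬ ((⊤ : SimpleGraph V).deleteEdges T).Reachable x z ∧
      ¬ ((⊤ : SimpleGraph V).deleteEdges T).Reachable y z := by
    by_contra! h
    exact not_connected_sup_edge hT x y
      (connected_sup_edge_of_reachable fun v => or_iff_not_imp_left.2 (h v))
  exact ⟨x, y, z, hxy, hxz, hyz⟩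

lemma injOn_uncurry_sym2Mk_product {A B : Finset V} (h : Disjoint A B) :
    Set.InjOn Sym2.mk.uncurry (↑(A ×ˢ B) : Set (V × V)) := by
  rintro ⟨u, v⟩ huv ⟨u', v'⟩ huv' heq
  simp only [coe_product, Set.mem_prod, mem_coe] at huv huv'
  rcases Sym2.eq_iff.1 heq with ⟨rfl, rfl⟩ | ⟨rfl, rfl⟩
  · rfl
  · exact (disjoint_left.1 h huv.1 huv'.2).elim

variable [Fintype V] [DecidableEq V]

def cutEdges (A : Finset V) : Finset (Sym2 V) := (A ×ˢ Aᶜ).image Sym2.mk.uncurry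

lemma mem_cutEdges {A : Finset V} {e : Sym2 V} :
    e ∈ cutEdges A ↔ ∃ u ∈ A, ∃ v ∉ A, s(u, v) = e := by
  simp [cutEdges]

lemma mk_mem_cutEdges {A : Finset V} {u v : V} (hu : u ∈ A) (hv : v ∉ A) :
    s(u, v) ∈ cutEdges A :=
  mem_cutEdges.2 ⟨u, hu, v, hv, rfl⟩

lemma coe_cutEdges_subset_edgeSet_top (A : Finset V) :
    (cutEdges A : Set (Sym2 V)) ⊆ (⊤ : SimpleGraph V).edgeSet := by
  rintro _ he
  obtain ⟨u, hu, v, hv, rfl⟩ := mem_cutEdges.1 he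
  exact ne_of_mem_of_not_mem hu hv

lemma card_cutEdges (A : Finset V) : #(cutEdges A) = #A * (Fintype.card V - #A) := by
  rw [cutEdges, card_image_of_injOn (injOn_uncurry_sym2Mk_product disjoint_compl_right),
    card_product, card_compl]

lemma cutEdges_inter_cutEdges {A B : Finset V} (h : Disjoint A B) :
    cutEdges A ∩ cutEdges B = (A ×ˢ B).image Sym2.mk.uncurry := by
  ext e
  simp only [mem_inter, mem_cutEdges, mem_image, mem_product, Prod.exists,
    Function.uncurry_apply_pair]
  constructor
  · rintro ⟨⟨u, hu, v, hv, rfl⟩, ⟨u', hu', v', hv', heq⟩⟩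
    rcases Sym2.eq_iff.1 heq with ⟨rfl, -⟩ | ⟨rfl, -⟩
    · exact (disjoint_left.1 h hu hu').elim
    · exact ⟨u, u', ⟨hu, hu'⟩, rfl⟩
  · rintro ⟨u, v, ⟨hu, hv⟩, rfl⟩
    exact ⟨⟨u, hu, v, disjoint_right.1 h hv, rfl⟩,
      ⟨v, hv, u, disjoint_left.1 h hu, Sym2.eq_swap⟩⟩

lemma card_cutEdges_union_add_mul {A B : Finset V} (h : Disjoint A B) :
    #(cutEdges A ∪ cutEdges B) + #A * #B =
      #A * (Fintype.card V - #A) + #B * (Fintype.card V - #B) := by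
  rw [← card_cutEdges, ← card_cutEdges, ← card_union_add_card_inter,
    cutEdges_inter_cutEdges h, card_image_of_injOn (injOn_uncurry_sym2Mk_product h), card_product]

lemma card_cutEdges_singleton_union {x y : V} (hxy : x ≠ y) :
    #(cutEdges {x} ∪ cutEdges {y}) = 2 * Fintype.card V - 3 := by
  have key := card_cutEdges_union_add_mul (disjoint_singleton.2 hxy)
  have two_le : 2 ≤ Fintype.card V := Fintype.one_lt_card_iff.2 ⟨x, y, hxy⟩
  simp only [card_singleton, one_mul] at key
  omega

lemma two_mul_sub_three_le {n a b c : ℕ} (ha : 1 ≤ a) (hb : 1 ≤ b) (hab : a + b < n)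
    (hc : c + a * b = a * (n - a) + b * (n - b)) : 2 * n - 3 ≤ c := by
  zify [(by omega : a ≤ n), (by omega : b ≤ n)] at hc
  have h₁ : (0 : ℤ) ≤ (a + b - 2) * (n - a - b - 1) := by apply mul_nonneg <;> omega
  have h₂ : (0 : ℤ) ≤ (a - 1) * (b - 1) := by apply mul_nonneg <;> omega
  have : (2 * n : ℤ) ≤ c + 3 := by nlinarith
  omega

lemma two_le_ncard_edgeSet_inter_cutEdges_union {S : SimpleGraph V} (hS : S.Preconnected)
    {A B : Finset V} (hAB : Disjoint A B) {a b c : V} (ha : a ∈ A) (hb : b ∈ B)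
    (hc : c ∉ A ∪ B) : 2 ≤ (S.edgeSet ∩ ↑(cutEdges A ∪ cutEdges B)).ncard := by
  obtain ⟨p, hp, q, hq, hpq⟩ := exists_adj_of_mem_of_notMem hS (mem_union_left B ha) hc
  wlog hpA : p ∈ A generalizing A B a b
  · rw [union_comm] at hp hq ⊢
    exact this hAB.symm hb ha (by rwa [union_comm]) hp hq (by simpa [hpA] using hp)
  obtain ⟨r, hr, w, hw, hrw⟩ := exists_adj_of_mem_of_notMem hS hb (disjoint_left.1 hAB hpA)
  have hqA : q ∉ A := fun h => hq (mem_union_left B h)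
  have hqB : q ∉ B := fun h => hq (mem_union_right A h)
  refine (Set.one_lt_ncard_iff (Set.toFinite _)).2 ⟨s(p, q), s(r, w), ?_, ?_, ?_⟩
  · exact ⟨hpq, mem_coe.2 (mem_union_left _ (mk_mem_cutEdges hpA hqA))⟩
  · exact ⟨hrw, mem_coe.2 (mem_union_right _ (mk_mem_cutEdges hr hw))⟩
  · rw [Ne, Sym2.eq_iff]
    rintro (⟨rfl, -⟩ | ⟨-, rfl⟩)
    · exact disjoint_left.1 hAB hpA hr
    · exact hqB hr

lemma cutEdges_reachable_subset (G : SimpleGraph V) (x : V) [DecidablePred (G.Reachable x)] :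
    (cutEdges {v | G.Reachable x v} : Set (Sym2 V)) ⊆
      (⊤ : SimpleGraph V).edgeSet \ G.edgeSet := by
  rintro _ he
  obtain ⟨u, hu, v, hv, rfl⟩ := mem_cutEdges.1 he
  simp only [mem_filter, mem_univ, true_and] at hu hv
  exact ⟨ne_of_mem_of_not_mem (s := {v | G.Reachable x v}) hu hv,
    fun huv => hv (hu.trans (Adj.reachable huv))⟩

lemma two_mul_card_sub_three_le_ncard [Nonempty V] {T : Set (Sym2 V)}
    (hT : ∀ S : SimpleGraph V, S.IsTree → 2 ≤ (S.edgeSet ∩ T).ncard) :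
    2 * Fintype.card V - 3 ≤ T.ncard := by
  classical
  obtain ⟨x, y, z, hxy, hxz, hyz⟩ := exists_three_not_reachable_deleteEdges hT
  set G := (⊤ : SimpleGraph V).deleteEdges T
  set A : Finset V := {v | G.Reachable x v}
  set B : Finset V := {v | G.Reachable y v}
  have hAB : Disjoint A B := by
    simp only [A, B, disjoint_filter]
    exact fun v _ hx hy => hxy (hx.trans hy.symm)
  have hz : z ∉ A ∪ B := by simp [A, B, hxz, hyz]
  have hsub : (↑(cutEdges A ∪ cutEdges B) : Set (Sym2 V)) ⊆ T := by
    rw [coe_union]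
    refine Set.union_subset ?_ ?_ <;>
    · refine (cutEdges_reachable_subset G _).trans ?_
      rw [edgeSet_deleteEdges, Set.sdiff_sdiff_right_self]
      exact Set.inter_subset_right
  have hcard := card_cutEdges_union_add_mul hAB
  have hA : 1 ≤ #A := card_pos.2 ⟨x, by simp [A]⟩
  have hB : 1 ≤ #B := card_pos.2 ⟨y, by simp [B]⟩
  have hAB_lt : #A + #B < Fintype.card V := by
    rw [← card_union_of_disjoint hAB]
    exact card_lt_univ_of_notMem hz
  calc 2 * Fintype.card V - 3 ≤ #(cutEdges A ∪ cutEdges B) :=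
        two_mul_sub_three_le hA hB hAB_lt hcard
    _ = (↑(cutEdges A ∪ cutEdges B) : Set (Sym2 V)).ncard := (Set.ncard_coe_finset _).symm
    _ ≤ T.ncard := Set.ncard_le_ncard hsub

end DoubleTransversal

open DoubleTransversal in
/-- Jiang–West: for `n ≥ 3`, the minimum size of a set of edges of the
complete graph `K_n` meeting every spanning tree in at least two edges is `2n - 3`. -/
theorem double_transversal_spanning_trees_complete (n : ℕ) (hn : 3 ≤ n) :
    sInf {t : ℕ | ∃ T ⊆ (⊤ : SimpleGraph (Fin n)).edgeSet, T.ncard = t ∧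
      ∀ S : SimpleGraph (Fin n), S.IsTree → 2 ≤ (S.edgeSet ∩ T).ncard} = 2 * n - 3 := by
  let x : Fin n := ⟨0, by omega⟩
  let y : Fin n := ⟨1, by omega⟩
  let z : Fin n := ⟨2, by omega⟩
  have : Nonempty (Fin n) := ⟨x⟩
  refine IsLeast.csInf_eq ⟨⟨↑(cutEdges {x} ∪ cutEdges {y}), ?_, ?_, fun S hS => ?_⟩, ?_⟩
  · rw [coe_union]
    exact Set.union_subset (coe_cutEdges_subset_edgeSet_top _) (coe_cutEdges_subset_edgeSet_top _)
  · rw [Set.ncard_coe_finset, card_cutEdges_singleton_union (by simp [x, y, Fin.ext_iff]),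
      Fintype.card_fin]
  · exact two_le_ncard_edgeSet_inter_cutEdges_union hS.connected.preconnected
      (disjoint_singleton.2 (by simp [x, y, Fin.ext_iff])) (mem_singleton_self x)
      (mem_singleton_self y) (c := z) (by simp [x, y, z, Fin.ext_iff])
  · rintro _ ⟨T, -, rfl, hT⟩
    simpa using two_mul_card_sub_three_le_ncard hT
end
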